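/- arXiv:1301.3993 — 5 statements merged into one kernel-verified Lean document; each statement's English description precedes it below -/
import Mathlib

section
/- The following are equivalent: (1) p_n · p_{n+1} ≥ 0 for all n ∈ ℕ; (2) γ ∈ {cos(π/m) : m ∈ ℕ, m ≥ 2} ∪ [1, ∞). -/
/-!
The sequence is `p n = U (n - 1) γ` for the Chebyshev polynomials `U` of the second kind.
For `γ ≥ 1` these values are nonnegative and increasing in `n`. For `γ = cos θ` with
`0 < θ < π` we have `p n * sin θ = sin (n θ)`, so the sign condition says that no multiple
of `π` lies strictly between two consecutive points `n θ`, `(n + 1) θ`; taking `m = ⌊π / θ⌋`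
this forces `m θ = π`. The case `n = 1` of the condition reads `2γ ≥ 0`, which excludes `γ ≤ -1`.
-/

open Real Polynomial Chebyshev

section OrderedRing

variable {R : Type*} [CommRing R] [LinearOrder R] [IsStrictOrderedRing R] {x : R}

theorem Polynomial.Chebyshev.U_eval_nonneg_and_le_U_eval_add_one (hx : 1 ≤ x) (n : ℕ) :
    0 ≤ (U R n).eval x ∧ (U R n).eval x ≤ (U R (n + 1)).eval x := by
  induction n with
  | zero =>
    simp only [Nat.cast_zero, zero_add, U_zero, U_one, eval_one, eval_mul, eval_ofNat, eval_X]
    constructor <;> linarith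
  | succ n ih =>
    obtain ⟨hnonneg, hle⟩ := ih
    have hrec : (U R ((n + 1 : ℕ) + 1)).eval x
        = 2 * x * (U R (n + 1)).eval x - (U R n).eval x := by
      rw [show ((n + 1 : ℕ) : ℤ) + 1 = n + 2 by push_cast; ring, U_add_two]
      simp
    refine ⟨by push_cast; linarith, ?_⟩
    rw [hrec]
    push_cast
    nlinarith

theorem Polynomial.Chebyshev.U_eval_nonneg_of_one_le (hx : 1 ≤ x) {n : ℤ} (hn : -1 ≤ n) :
    0 ≤ (U R n).eval x := by
  obtain rfl | hn := hn.eq_or_lt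
  · simp
  · lift n to ℕ using by omega
    exact (U_eval_nonneg_and_le_U_eval_add_one hx n).1

end OrderedRing

theorem Polynomial.Chebyshev.U_real_cos_sub_one_mul_U_real_cos_mul_sin_sq (t : ℝ) (n : ℤ) :
    (U ℝ (n - 1)).eval (cos t) * (U ℝ n).eval (cos t) * sin t ^ 2
      = sin (n * t) * sin ((n + 1) * t) := by
  have h := U_real_cos t (n - 1)
  push_cast at h
  rw [sub_add_cancel] at h
  rw [← h, ← U_real_cos]
  ring

theorem Real.sin_mul_sin_nonneg_of_mem_Icc {k : ℕ} {x y : ℝ}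
    (hx : x ∈ Set.Icc (k * π) ((k + 1) * π)) (hy : y ∈ Set.Icc (k * π) ((k + 1) * π)) :
    0 ≤ sin x * sin y := by
  have hsx : 0 ≤ sin (x - k * π) := sin_nonneg_of_mem_Icc ⟨by linarith [hx.1], by linarith [hx.2]⟩
  have hsy : 0 ≤ sin (y - k * π) := sin_nonneg_of_mem_Icc ⟨by linarith [hy.1], by linarith [hy.2]⟩
  have hsign : ((-1 : ℝ) ^ k) ^ 2 = 1 := by rw [← pow_mul, mul_comm, pow_mul, neg_one_sq, one_pow]
  calc 0 ≤ sin (x - k * π) * sin (y - k * π) := mul_nonneg hsx hsy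
    _ = ((-1) ^ k) ^ 2 * (sin (x - k * π) * sin (y - k * π)) := by rw [hsign, one_mul]
    _ = sin x * sin y := by
      rw [← sub_add_cancel x (k * π), ← sub_add_cancel y (k * π), sin_add_nat_mul_pi,
        sin_add_nat_mul_pi]
      simp only [sub_add_cancel]
      ring

theorem Real.sin_mul_sin_pi_div_nonneg {m : ℕ} (hm : m ≠ 0) (n : ℕ) :
    0 ≤ sin (n * (π / m)) * sin ((n + 1) * (π / m)) := by
  have hm' : (0 : ℝ) < m := by positivity
  have hlo : (n / m : ℕ) * m ≤ n := Nat.div_mul_le_self n m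
  have hhi : n + 1 ≤ (n / m + 1) * m := by
    rw [add_mul, one_mul]; have := Nat.lt_div_mul_add (a := n) (Nat.pos_of_ne_zero hm); omega
  have hlo' : ((n / m : ℕ) : ℝ) * m ≤ n := by exact_mod_cast hlo
  have hhi' : (n : ℝ) + 1 ≤ ((n / m : ℕ) + 1) * m := by exact_mod_cast hhi
  refine sin_mul_sin_nonneg_of_mem_Icc (k := n / m) ⟨?_, ?_⟩ ⟨?_, ?_⟩
  all_goals
    rw [mul_div_assoc', mul_div_right_comm]
    refine mul_le_mul_of_nonneg_right ?_ pi_pos.le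
    first | (rw [le_div_iff₀ hm']; linarith) | (rw [div_le_iff₀ hm']; linarith)

theorem Real.exists_eq_pi_div_of_sin_mul_sin_nonneg {t : ℝ} (ht : 0 < t) (htπ : t < π)
    (h : ∀ n : ℕ, 0 ≤ sin (n * t) * sin ((n + 1) * t)) : ∃ m : ℕ, 2 ≤ m ∧ t = π / m := by
  set m := ⌊π / t⌋₊
  have hm : 1 ≤ m := Nat.le_floor <| by rw [Nat.cast_one, le_div_iff₀ ht]; linarith
  have hm' : (1 : ℝ) ≤ m := by exact_mod_cast hm
  have hle : m * t ≤ π := (le_div_iff₀ ht).1 (Nat.floor_le (by positivity))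
  have hlt : π < (m + 1) * t := (div_lt_iff₀ ht).1 (Nat.lt_floor_add_one _)
  obtain heq | hlt' := hle.eq_or_lt
  · have h2 : (1 : ℝ) < m := by nlinarith
    exact ⟨m, by exact_mod_cast h2, by rw [← heq]; field_simp⟩
  · -- `m t < π < (m + 1) t`, so consecutive sines change sign
    have hpos : 0 < sin (m * t) := sin_pos_of_pos_of_lt_pi (by positivity) hlt'
    have hneg : sin ((m + 1) * t) < 0 := by
      rw [← neg_pos, ← sin_sub_pi]
      exact sin_pos_of_pos_of_lt_pi (by linarith) (by linarith)
    exact absurd (h m) (not_le.2 (mul_neg_of_pos_of_neg hpos hneg))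

theorem Polynomial.Chebyshev.U_eval_sub_one_mul_U_eval_nonneg_iff (γ : ℝ) :
    (∀ n : ℕ, 0 ≤ (U ℝ (n - 1)).eval γ * (U ℝ n).eval γ) ↔
      (∃ m : ℕ, 2 ≤ m ∧ γ = cos (π / m)) ∨ 1 ≤ γ := by
  constructor
  · intro h
    refine or_iff_not_imp_right.2 fun hγ1 => ?_
    have hγ0 : 0 ≤ γ := by simpa using h 1
    have hcos : cos (arccos γ) = γ := cos_arccos (by linarith) (by linarith)
    have hsin : ∀ n : ℕ, 0 ≤ sin (n * arccos γ) * sin ((n + 1) * arccos γ) := by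
      intro n
      have := U_real_cos_sub_one_mul_U_real_cos_mul_sin_sq (arccos γ) n
      rw [hcos] at this
      push_cast at this
      rw [← this]
      exact mul_nonneg (h n) (sq_nonneg _)
    obtain ⟨m, hm, hθ⟩ := exists_eq_pi_div_of_sin_mul_sin_nonneg (arccos_pos.2 (not_le.1 hγ1))
      (arccos_lt_pi.2 (by linarith)) hsin
    exact ⟨m, hm, by rw [← hθ, hcos]⟩
  · rintro (⟨m, hm, rfl⟩ | hγ) n
    · have hsin : 0 < sin (π / m) ^ 2 := by
        have : (2 : ℝ) ≤ m := by exact_mod_cast hm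
        exact pow_pos (sin_pos_of_pos_of_lt_pi (by positivity) (by
          rw [div_lt_iff₀ (by positivity)]; nlinarith [pi_pos])) 2
      refine nonneg_of_mul_nonneg_left ?_ hsin
      rw [U_real_cos_sub_one_mul_U_real_cos_mul_sin_sq]
      exact_mod_cast sin_mul_sin_pi_div_nonneg (by omega) n
    · exact mul_nonneg (U_eval_nonneg_of_one_le hγ (by omega))
        (U_eval_nonneg_of_one_le hγ (by omega))

theorem eq_eval_U_of_chebyshev_recurrence {γ : ℝ} {p : ℤ → ℝ}
    (hneg : p (-1) = -1) (h0 : p 0 = 0)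
    (hrec : ∀ n : ℕ, p ((n : ℤ) + 1) = 2 * γ * p n - p ((n : ℤ) - 1)) (n : ℕ) :
    p n = (U ℝ (n - 1)).eval γ := by
  suffices ∀ n : ℕ, p ((n : ℤ) - 1) = (U ℝ (n - 2)).eval γ ∧ p n = (U ℝ (n - 1)).eval γ from
    (this n).2
  intro n
  induction n with
  | zero => simp [hneg, h0]
  | succ n ih =>
    push_cast
    refine ⟨by rw [add_sub_cancel_right, ih.2]; ring_nf, ?_⟩
    rw [hrec, ih.1, ih.2, add_sub_cancel_right, U_eq ℝ n]
    simp

/-- With `γ ∈ ℝ` and the sequence `p` defined by `p₋₁ = -1`, `p₀ = 0`,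
`p_{n+1} = 2γ pₙ - p_{n-1}` for `n ∈ ℕ`, the following are equivalent:
(1) `pₙ p_{n+1} ≥ 0` for all `n ∈ ℕ`;
(2) `γ ∈ {cos (π/m) : m ∈ ℕ, m ≥ 2} ∪ [1, ∞)`. -/
theorem stmt2 (γ : ℝ) (p : ℤ → ℝ)
    (hneg : p (-1) = -1) (h0 : p 0 = 0)
    (hrec : ∀ n : ℕ, p ((n : ℤ) + 1) = 2 * γ * p n - p ((n : ℤ) - 1)) :
    (∀ n : ℕ, 0 ≤ p n * p ((n : ℤ) + 1)) ↔
      ((∃ m : ℕ, 2 ≤ m ∧ γ = Real.cos (Real.pi / m)) ∨ 1 ≤ γ) := by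
  have hp := eq_eval_U_of_chebyshev_recurrence hneg h0 hrec
  have hp_succ (n : ℕ) : p ((n : ℤ) + 1) = (U ℝ n).eval γ := by
    simpa using hp (n + 1)
  simp only [hp, hp_succ]
  exact U_eval_sub_one_mul_U_eval_nonneg_iff γ
end

section
/- If γ = cos(kπ/m) for some k, m ∈ ℕ with 0 < k < m, then the matrices A and B satisfy the braid relation ABA··· = BAB···, where there are exactly m factors on each side (the left side being the alternating product beginning with A and the right side the alternating product beginning with B). -/
/-- The alternating product of `m` factors starting with `a`:
`altStart a b 0 = 1`, and `altStart a b m = a * b * a * ⋯` (`m` factors). -/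
def altStart {G : Type*} [Monoid G] : G → G → ℕ → G
  | _, _, 0 => 1
  | a, b, m + 1 => a * altStart b a m

@[simp] lemma altStart_zero {G : Type*} [Monoid G] (a b : G) : altStart a b 0 = 1 := rfl
@[simp] lemma altStart_succ {G : Type*} [Monoid G] (a b : G) (m : ℕ) :
    altStart a b (m + 1) = a * altStart b a m := rfl

lemma altStart_conj {G : Type*} [Monoid G] (u : Gˣ) (a b : G) (n : ℕ) :
    altStart (↑u * a * ↑u⁻¹) (↑u * b * ↑u⁻¹) n = ↑u * altStart a b n * ↑u⁻¹ := by
  induction n generalizing a b with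
  | zero => simp
  | succ n ih =>
    rw [altStart_succ, altStart_succ, ih b a]
    simp only [mul_assoc, Units.inv_mul_cancel_left]

/-- Chebyshev-like sequence: `chebP γ n = U_{n-1}(γ)`. -/
noncomputable def chebP (γ : ℝ) : ℕ → ℝ
  | 0 => 0
  | 1 => 1
  | (n+2) => 2*γ*chebP γ (n+1) - chebP γ n

lemma chebP_sin (θ : ℝ) : ∀ n : ℕ, chebP (Real.cos θ) n * Real.sin θ = Real.sin (n * θ) := by
  intro n
  induction n using Nat.twoStepInduction with
  | zero => simp [chebP]
  | one => simp [chebP]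
  | more n ih1 ih2 =>
    have h1 : ((n:ℝ)+2) * θ = ((n+1) * θ) + θ := by ring
    have h2 : (n:ℝ) * θ = ((n+1) * θ) - θ := by ring
    push_cast
    rw [h1, Real.sin_add]
    push_cast at ih1 ih2
    rw [h2, Real.sin_sub] at ih1
    simp only [chebP]
    linear_combination 2 * Real.cos θ * ih2 - ih1

lemma braid_key {R : Type*} [CommRing R] (c r : R) (p : ℕ → R)
    (hp0 : p 0 = 0) (hp1 : p 1 = 1)
    (hp : ∀ n, p (n+2) = c * p (n+1) - p n) (n : ℕ) :
    (altStart !![-1, c*r; 0, r^2] !![r^2, 0; c*r, -1] (2*n+1)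
      = !![-(r^(2*n) * p (2*n+1)), r^(2*n) * (c*r*p (2*n+1) - r * p (2*n));
           -(r^(2*n) * r * p (2*n)), r^(2*n) * r^2 * p (2*n+1)]) ∧
    (altStart !![r^2, 0; c*r, -1] !![-1, c*r; 0, r^2] (2*n+1)
      = !![r^(2*n) * r^2 * p (2*n+1), -(r^(2*n) * r * p (2*n));
           r^(2*n) * (c*r*p (2*n+1) - r*p (2*n)), -(r^(2*n) * p (2*n+1))]) ∧
    (altStart !![-1, c*r; 0, r^2] !![r^2, 0; c*r, -1] (2*n+2)
      = !![r^(2*n+1) * (c*r*p (2*n+2) - r*p (2*n+1)), -(r^(2*n+1) * p (2*n+2));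
           r^(2*n+1) * r^2 * p (2*n+2), -(r^(2*n+1) * r * p (2*n+1))]) ∧
    (altStart !![r^2, 0; c*r, -1] !![-1, c*r; 0, r^2] (2*n+2)
      = !![-(r^(2*n+1) * r * p (2*n+1)), r^(2*n+1) * r^2 * p (2*n+2);
           -(r^(2*n+1) * p (2*n+2)), r^(2*n+1) * (c*r*p (2*n+2) - r*p (2*n+1))]) := by
  induction n with
  | zero =>
    have e2 : p 2 = c * p 1 - p 0 := hp 0
    refine ⟨?_, ?_, ?_, ?_⟩ <;>
    · show _ * _ = _
      ext i j
      fin_cases i <;> fin_cases j <;>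
        simp [altStart, Matrix.mul_apply, Fin.sum_univ_two, hp0, hp1, e2] <;> ring
  | succ n ih =>
    obtain ⟨h1, h2, h3, h4⟩ := ih
    have e1 : p (2*n+3) = c * p (2*n+2) - p (2*n+1) := by
      rw [show 2*n+3 = (2*n+1)+2 by ring, show 2*n+2 = (2*n+1)+1 by ring]; exact hp _
    have e2 : p (2*n+4) = c * p (2*n+3) - p (2*n+2) := by
      rw [show 2*n+4 = (2*n+2)+2 by ring, show 2*n+3 = (2*n+2)+1 by ring]; exact hp _
    have g1 : altStart !![-1, c*r; 0, r^2] !![r^2, 0; c*r, -1] (2*(n+1)+1)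
      = !![-(r^(2*(n+1)) * p (2*(n+1)+1)), r^(2*(n+1)) * (c*r*p (2*(n+1)+1) - r * p (2*(n+1)));
           -(r^(2*(n+1)) * r * p (2*(n+1))), r^(2*(n+1)) * r^2 * p (2*(n+1)+1)] := by
      rw [show 2*(n+1)+1 = (2*n+2)+1 by ring, altStart_succ, h4]
      ext i j
      fin_cases i <;> fin_cases j <;>
        · simp [Matrix.mul_apply, Fin.sum_univ_two, show 2*(n+1)+1 = 2*n+3 by ring,
            show 2*(n+1) = 2*n+2 by ring, e1]
          ring
    have g2 : altStart !![r^2, 0; c*r, -1] !![-1, c*r; 0, r^2] (2*(n+1)+1)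
      = !![r^(2*(n+1)) * r^2 * p (2*(n+1)+1), -(r^(2*(n+1)) * r * p (2*(n+1)));
           r^(2*(n+1)) * (c*r*p (2*(n+1)+1) - r*p (2*(n+1))), -(r^(2*(n+1)) * p (2*(n+1)+1))] := by
      rw [show 2*(n+1)+1 = (2*n+2)+1 by ring, altStart_succ, h3]
      ext i j
      fin_cases i <;> fin_cases j <;>
        · simp [Matrix.mul_apply, Fin.sum_univ_two, show 2*(n+1)+1 = 2*n+3 by ring,
            show 2*(n+1) = 2*n+2 by ring, e1]
          ring
    refine ⟨g1, g2, ?_, ?_⟩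
    · rw [show 2*(n+1)+2 = (2*(n+1)+1)+1 by ring, altStart_succ, g2]
      ext i j
      fin_cases i <;> fin_cases j <;>
        · simp [Matrix.mul_apply, Fin.sum_univ_two, show 2*(n+1)+2 = 2*n+4 by ring,
            show 2*(n+1)+1 = 2*n+3 by ring, show 2*(n+1) = 2*n+2 by ring, e1, e2]
          ring
    · rw [show 2*(n+1)+2 = (2*(n+1)+1)+1 by ring, altStart_succ, g1]
      ext i j
      fin_cases i <;> fin_cases j <;>
        · simp [Matrix.mul_apply, Fin.sum_univ_two, show 2*(n+1)+2 = 2*n+4 by ring,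
            show 2*(n+1)+1 = 2*n+3 by ring, show 2*(n+1) = 2*n+2 by ring, e1, e2]
          ring

/-- Let `𝒜` be a commutative `ℝ`-algebra, `q^{1/2}` and `X` units of `𝒜`,
`q = (q^{1/2})²`, `γ ∈ ℝ`, and let
`A = [[-1, 2γ q^{1/2} X], [0, q]]`, `B = [[q, 0], [2γ q^{1/2} X⁻¹, -1]]`.
If `γ = cos (kπ/m)` with `0 < k < m`, then `ABA⋯ = BAB⋯` (`m` factors on each side). -/
theorem stmt3 {𝒜 : Type*} [CommRing 𝒜] [Algebra ℝ 𝒜] (q2 X : 𝒜ˣ) (γ : ℝ)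
    (A B : Matrix (Fin 2) (Fin 2) 𝒜)
    (hA : A = !![-1, algebraMap ℝ 𝒜 (2 * γ) * (q2 : 𝒜) * (X : 𝒜);
                 0, (q2 : 𝒜) ^ 2])
    (hB : B = !![(q2 : 𝒜) ^ 2, 0;
                 algebraMap ℝ 𝒜 (2 * γ) * (q2 : 𝒜) * ((X⁻¹ : 𝒜ˣ) : 𝒜), -1])
    (k m : ℕ) (hk : 0 < k) (hkm : k < m)
    (hγ : γ = Real.cos (k * Real.pi / m)) :
    altStart A B m = altStart B A m := by
  set c : 𝒜 := algebraMap ℝ 𝒜 (2 * γ) with hc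
  set r : 𝒜 := (q2 : 𝒜) with hr
  set U : (Matrix (Fin 2) (Fin 2) 𝒜)ˣ :=
    ⟨!![(X : 𝒜), 0; 0, 1], !![((X⁻¹ : 𝒜ˣ) : 𝒜), 0; 0, 1],
      by ext i j; fin_cases i <;> fin_cases j <;>
           simp [Matrix.mul_apply, Fin.sum_univ_two, Matrix.one_apply, X.mul_inv],
      by ext i j; fin_cases i <;> fin_cases j <;>
           simp [Matrix.mul_apply, Fin.sum_univ_two, Matrix.one_apply, X.inv_mul]⟩ with hU
  have hAc : U.val * !![-1, c*r; 0, r^2] = A * U.val := by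
    rw [hA]
    ext i j; fin_cases i <;> fin_cases j <;>
      simp [hU, Matrix.mul_apply, Fin.sum_univ_two] <;> ring
  have hBc : U.val * !![r^2, 0; c*r, -1] = B * U.val := by
    rw [hB]
    ext i j; fin_cases i <;> fin_cases j <;>
      simp [hU, Matrix.mul_apply, Fin.sum_univ_two] <;> ring
  have hAs : A = U.val * !![-1, c*r; 0, r^2] * (U⁻¹).val := by
    rw [show (U⁻¹).val = U.inv from rfl, hAc, mul_assoc, U.val_inv, mul_one]
  have hBs : B = U.val * !![r^2, 0; c*r, -1] * (U⁻¹).val := by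
    rw [show (U⁻¹).val = U.inv from rfl, hBc, mul_assoc, U.val_inv, mul_one]
  -- the Chebyshev value vanishes
  have hm0 : (m : ℝ) ≠ 0 := Nat.cast_ne_zero.2 (by omega)
  have hcheb : chebP γ m = 0 := by
    set θ : ℝ := k * Real.pi / m with hθ
    have hsin : Real.sin θ ≠ 0 := by
      refine ne_of_gt (Real.sin_pos_of_pos_of_lt_pi ?_ ?_)
      · have : (0:ℝ) < k := by exact_mod_cast hk
        positivity
      · rw [hθ, div_lt_iff₀ (by positivity)]
        have : (k:ℝ) < m := by exact_mod_cast hkm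
        nlinarith [Real.pi_pos]
    have h1 : chebP γ m * Real.sin θ = Real.sin (m * θ) := by
      rw [hγ]; exact chebP_sin θ m
    have h2 : (m:ℝ) * θ = k * Real.pi := by
      rw [hθ]; field_simp
    rw [h2, Real.sin_nat_mul_pi] at h1
    exact (mul_eq_zero.1 h1).resolve_right hsin
  -- lift Chebyshev sequence to 𝒜
  set p : ℕ → 𝒜 := fun n => algebraMap ℝ 𝒜 (chebP γ n) with hpdef
  have hp0 : p 0 = 0 := by simp [hpdef, chebP]
  have hp1 : p 1 = 1 := by simp [hpdef, chebP]
  have hp : ∀ n, p (n+2) = c * p (n+1) - p n := by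
    intro n
    simp only [hpdef, hc, show chebP γ (n+2) = 2*γ*chebP γ (n+1) - chebP γ n from rfl,
      map_sub, map_mul]
  have hpm : p m = 0 := by simp [hpdef, hcheb]
  -- reduce to the symmetric case
  suffices hsym : altStart !![-1, c*r; 0, r^2] !![r^2, 0; c*r, -1] m
      = altStart !![r^2, 0; c*r, -1] !![-1, c*r; 0, r^2] m by
    rw [hAs, hBs, altStart_conj, altStart_conj, hsym]
  obtain ⟨n, rfl | rfl⟩ : ∃ n, m = 2*n+1 ∨ m = 2*n+2 := ⟨(m-1)/2, by omega⟩
  · rw [(braid_key c r p hp0 hp1 hp n).1, (braid_key c r p hp0 hp1 hp n).2.1]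
    ext i j; fin_cases i <;> fin_cases j <;> simp [hpm] <;> ring
  · rw [(braid_key c r p hp0 hp1 hp n).2.2.1, (braid_key c r p hp0 hp1 hp n).2.2.2]
    ext i j; fin_cases i <;> fin_cases j <;> simp [hpm] <;> ring
end

section
/- Suppose q = 1. If γ = cos(kπ/m) for some k, m ∈ ℕ with 0 < k < m and gcd(m, k) = 1, then the matrix AB has order exactly m. If γ is not of the form cos(kπ/m) for any integers k, m with 0 < k < m, then AB has infinite order (i.e., (AB)^n ≠ 1 for all integers n > 0). -/
/-!
With `q = 1` the matrix `M = AB` has determinant `1` and trace `4γ² - 2 = 2 cos 2θ`, where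
`γ = cos θ`, so by Cayley–Hamilton `M² = 2 cos 2θ • M - 1` and, inductively,
`Mⁿ = U_{n-1}(cos 2θ) • M - U_{n-2}(cos 2θ) • 1` with the Chebyshev polynomials `U` of the second
kind. For `γ ≠ 0` the matrix `M` is not scalar (its off-diagonal entry is a unit), so `Mⁿ = 1`
exactly when `U_{n-1}(cos 2θ) = 0` and `U_{n-2}(cos 2θ) = -1`, i.e. when `cos 2nθ = 1`; for
`γ = 0` we have `M = -1` and the same criterion holds. With `θ = kπ/m` and `gcd(m, k) = 1` this
says `m ∣ n`. Conversely, if `Mⁿ = 1` then `2γ² - 1` is a root of `U_{n-1}`, hence equals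
`cos (jπ/n)` with `0 < j < n`, and then `γ = ± cos (jπ/2n)` is of the excluded form.
-/

open Polynomial Polynomial.Chebyshev Real Set

section

variable {S R : Type*} [CommRing S] [Ring R] [Algebra S R] {x : R} {u : S}

theorem pow_eq_chebyshevU_smul_sub (h : x ^ 2 = (2 * u) • x - 1) (n : ℕ) :
    x ^ n = (U S (n - 1)).eval u • x - (U S (n - 2)).eval u • 1 := by
  induction n with
  | zero => simp
  | succ n ih =>
    have hU : U S ((n + 1 : ℕ) - 1) = 2 * X * U S (n - 1) - U S (n - 2) := by
      push_cast; rw [add_sub_cancel_right, U_eq]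
    have hU' : ((n + 1 : ℕ) : ℤ) - 2 = n - 1 := by push_cast; ring
    rw [pow_succ, ih, sub_mul, smul_mul_assoc, smul_mul_assoc, ← sq, h, one_mul, hU, hU']
    simp only [eval_sub, eval_mul, eval_ofNat, eval_X, smul_sub, smul_smul, sub_smul]
    module

end

section

variable {K R : Type*} [Field K] [Ring R] [Nontrivial R] [Algebra K R] {x : R} {u : K}

theorem pow_eq_one_iff_chebyshevU (hx : x ∉ range (algebraMap K R))
    (h : x ^ 2 = (2 * u) • x - 1) (n : ℕ) :
    x ^ n = 1 ↔ (U K (n - 1)).eval u = 0 ∧ (U K (n - 2)).eval u = -1 := by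
  rw [pow_eq_chebyshevU_smul_sub h]
  refine ⟨fun hn => ?_, fun ⟨ha, hb⟩ => by simp [ha, hb]⟩
  set a := (U K (n - 1)).eval u
  set b := (U K (n - 2)).eval u
  have hax : a • x = algebraMap K R (1 + b) := by
    rw [map_add, map_one, Algebra.algebraMap_eq_smul_one]
    exact eq_add_of_sub_eq hn
  have ha : a = 0 := by
    by_contra ha
    refine hx ⟨a⁻¹ * (1 + b), ?_⟩
    rw [map_mul, ← hax, ← Algebra.smul_def, smul_smul, inv_mul_cancel₀ ha, one_smul]
  rw [ha, zero_smul, eq_comm, ← map_zero (algebraMap K R), (algebraMap K R).injective.eq_iff] at hax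
  exact ⟨ha, eq_neg_of_add_eq_zero_right hax⟩

end

theorem chebyshevU_eval_cos_eq_zero_and_eq_neg_one_iff {φ : ℝ} (hφ : sin φ ≠ 0) (n : ℕ) :
    (U ℝ (n - 1)).eval (cos φ) = 0 ∧ (U ℝ (n - 2)).eval (cos φ) = -1 ↔ cos (n * φ) = 1 := by
  have hn : (U ℝ (n - 1)).eval (cos φ) * sin φ = sin (n * φ) := by
    rw [U_real_cos]; push_cast; ring_nf
  have hn' : (U ℝ (n - 2)).eval (cos φ) * sin φ = sin (n * φ) * cos φ - cos (n * φ) * sin φ := by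
    rw [U_real_cos, ← sin_sub]; push_cast; ring_nf
  constructor
  · rintro ⟨ha, hb⟩
    rw [ha, zero_mul, eq_comm] at hn
    rw [hb, hn, zero_mul, zero_sub, neg_one_mul, neg_inj] at hn'
    exact (mul_eq_right₀ hφ).mp hn'.symm
  · intro hc
    have hs : sin (n * φ) = 0 := by nlinarith [sin_sq_add_cos_sq (n * φ)]
    rw [hs, hc] at hn'
    rw [hs] at hn
    exact ⟨(mul_eq_zero.mp hn).resolve_right hφ, mul_right_cancel₀ hφ (by rw [hn']; ring)⟩

theorem pow_eq_one_iff_cos_nat_mul_eq_one {R : Type*} [Ring R] [Nontrivial R] [Algebra ℝ R]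
    {x : R} {φ : ℝ} (hx : x ∉ range (algebraMap ℝ R)) (hφ : sin φ ≠ 0)
    (h : x ^ 2 = (2 * cos φ) • x - 1) (n : ℕ) : x ^ n = 1 ↔ cos (n * φ) = 1 :=
  (pow_eq_one_iff_chebyshevU hx h n).trans (chebyshevU_eval_cos_eq_zero_and_eq_neg_one_iff hφ n)

theorem exists_eq_cos_of_chebyshevU_eval_eq_zero {u : ℝ} {n : ℕ} (h : (U ℝ n).eval u = 0) :
    ∃ k : ℕ, 0 < k ∧ k < n + 1 ∧ u = cos (k * π / (n + 1)) := by
  have hu : u ∈ (U ℝ n).roots := (mem_roots (U_ne_zero ℝ n (by omega))).mpr h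
  rw [roots_U_real, Finset.mem_val, Finset.mem_image] at hu
  obtain ⟨k, hk, rfl⟩ := hu
  exact ⟨k + 1, k.succ_pos, by simpa using hk, by push_cast; rfl⟩

theorem exists_eq_cos_of_two_mul_sq_sub_one_eq_cos {γ : ℝ} {j n : ℕ} (hj : 0 < j) (hjn : j < n)
    (h : 2 * γ ^ 2 - 1 = cos (j * π / n)) :
    ∃ k m : ℕ, 0 < k ∧ k < m ∧ γ = cos (k * π / m) := by
  set α := j * π / (2 * n) with hα
  have hsq : γ ^ 2 = cos α ^ 2 := by
    rw [show (j : ℝ) * π / n = 2 * α by rw [hα]; field_simp, cos_two_mul] at h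
    linarith
  rcases sq_eq_sq_iff_eq_or_eq_neg.mp hsq with hγ | hγ
  · exact ⟨j, 2 * n, hj, by omega, by rw [hγ, hα]; push_cast; rfl⟩
  · refine ⟨2 * n - j, 2 * n, by omega, by omega, ?_⟩
    rw [hγ, ← cos_pi_sub, Nat.cast_sub (by omega)]
    congr 1
    have : (n : ℝ) ≠ 0 := by norm_cast; omega
    rw [hα]; push_cast; field_simp

theorem cos_nat_mul_two_mul_div_eq_one_iff {k m : ℕ} (hm : m ≠ 0) (hkm : m.Coprime k) (n : ℕ) :
    cos (n * (2 * (k * π / m))) = 1 ↔ m ∣ n := by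
  have hm' : (m : ℝ) ≠ 0 := Nat.cast_ne_zero.mpr hm
  rw [← hkm.dvd_mul_right, ← Int.natCast_dvd_natCast, cos_eq_one_iff]
  refine exists_congr fun j => ?_
  rw [show (n : ℝ) * (2 * (k * π / m)) = n * k / m * (2 * π) by ring,
    mul_left_inj' two_pi_pos.ne', eq_div_iff hm', eq_comm, mul_comm (m : ℤ)]
  norm_cast

theorem Matrix.sq_fin_two_eq_trace_smul_sub_det_smul {R : Type*} [CommRing R]
    (M : Matrix (Fin 2) (Fin 2) R) : M ^ 2 = M.trace • M - M.det • 1 := by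
  ext i j
  fin_cases i <;> fin_cases j <;>
    simp [sq, Matrix.mul_apply, Matrix.trace_fin_two, Matrix.det_fin_two] <;> ring

theorem Matrix.notMem_range_algebraMap_of_apply_ne_zero {K R n : Type*} [CommSemiring K]
    [Semiring R] [Algebra K R] [Fintype n] [DecidableEq n] {M : Matrix n n R} {i j : n}
    (hij : i ≠ j) (hM : M i j ≠ 0) : M ∉ range (algebraMap K (Matrix n n R)) := by
  rintro ⟨r, rfl⟩
  exact hM (by simp [Matrix.algebraMap_matrix_apply, hij])

section

variable {𝒜 : Type*} [CommRing 𝒜] [Algebra ℝ 𝒜] {s : 𝒜}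

def matA (γ : ℝ) (s X : 𝒜) : Matrix (Fin 2) (Fin 2) 𝒜 :=
  !![-1, algebraMap ℝ 𝒜 (2 * γ) * s * X; 0, s ^ 2]

def matB (γ : ℝ) (s Y : 𝒜) : Matrix (Fin 2) (Fin 2) 𝒜 :=
  !![s ^ 2, 0; algebraMap ℝ 𝒜 (2 * γ) * s * Y, -1]

theorem trace_matA_mul_matB (hs : s ^ 2 = 1) (γ : ℝ) (X : 𝒜ˣ) :
    (matA γ s X * matB γ s ↑X⁻¹).trace = algebraMap ℝ 𝒜 (2 * (2 * γ ^ 2 - 1)) := by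
  simp only [matA, matB, Matrix.trace_fin_two, Matrix.mul_apply, Fin.sum_univ_two,
    Matrix.of_apply, Matrix.cons_val', Matrix.cons_val_zero, Matrix.cons_val_one,
    Matrix.empty_val', Matrix.cons_val_fin_one, map_mul, map_sub, map_ofNat, map_pow, map_one]
  linear_combination (4 * algebraMap ℝ 𝒜 γ ^ 2 - 2) * hs +
    4 * algebraMap ℝ 𝒜 γ ^ 2 * s ^ 2 * X.mul_inv

theorem det_matA_mul_matB (hs : s ^ 2 = 1) (γ : ℝ) (X Y : 𝒜) :
    (matA γ s X * matB γ s Y).det = 1 := by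
  simp [matA, matB, Matrix.det_fin_two, hs]

theorem sq_matA_mul_matB (hs : s ^ 2 = 1) (γ : ℝ) (X : 𝒜ˣ) :
    (matA γ s X * matB γ s ↑X⁻¹) ^ 2 =
      (2 * (2 * γ ^ 2 - 1)) • (matA γ s X * matB γ s ↑X⁻¹) - 1 := by
  rw [Matrix.sq_fin_two_eq_trace_smul_sub_det_smul, trace_matA_mul_matB hs,
    det_matA_mul_matB hs, algebraMap_smul, one_smul]

theorem matA_mul_matB_apply_zero_one (γ : ℝ) (X Y : 𝒜) :
    (matA γ s X * matB γ s Y) 0 1 = -(algebraMap ℝ 𝒜 (2 * γ) * s * X) := by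
  simp [matA, matB]

theorem matA_zero_mul_matB_zero (hs : s ^ 2 = 1) (X Y : 𝒜) : matA 0 s X * matB 0 s Y = -1 := by
  ext i j
  fin_cases i <;> fin_cases j <;> simp [matA, matB, hs]

theorem matA_mul_matB_notMem_range_algebraMap [Nontrivial 𝒜] (hs : s ^ 2 = 1) {γ : ℝ}
    (hγ : γ ≠ 0) (X : 𝒜ˣ) :
    matA γ s X * matB γ s ↑X⁻¹ ∉ range (algebraMap ℝ (Matrix (Fin 2) (Fin 2) 𝒜)) := by
  refine Matrix.notMem_range_algebraMap_of_apply_ne_zero zero_ne_one ?_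
  have hc : IsUnit (algebraMap ℝ 𝒜 (2 * γ)) := (IsUnit.mk0 _ (by positivity)).map _
  have hs' : IsUnit s := IsUnit.of_mul_eq_one s (by rw [← sq, hs])
  rw [matA_mul_matB_apply_zero_one]
  exact (hc.mul hs' |>.mul X.isUnit).neg.ne_zero

theorem pow_matA_mul_matB_eq_one_iff [Nontrivial 𝒜] (hs : s ^ 2 = 1) (X : 𝒜ˣ) {θ : ℝ}
    (hθ : θ ∈ Ioo 0 π) (n : ℕ) :
    (matA (cos θ) s X * matB (cos θ) s ↑X⁻¹) ^ n = 1 ↔ cos (n * (2 * θ)) = 1 := by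
  by_cases hγ : cos θ = 0
  · have hθ' : θ = π / 2 := injOn_cos ⟨hθ.1.le, hθ.2.le⟩ ⟨by positivity, by linarith [pi_pos]⟩
      (by rw [hγ, cos_pi_div_two])
    rw [hγ, matA_zero_mul_matB_zero hs, hθ', show (n : ℝ) * (2 * (π / 2)) = n * π by ring,
      cos_nat_mul_pi, ← (algebraMap ℝ (Matrix (Fin 2) (Fin 2) 𝒜)).injective.eq_iff]
    simp
  · refine pow_eq_one_iff_cos_nat_mul_eq_one (matA_mul_matB_notMem_range_algebraMap hs hγ X)
      ?_ ?_ n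
    · rw [sin_two_mul]
      exact mul_ne_zero (mul_ne_zero two_ne_zero (sin_pos_of_pos_of_lt_pi hθ.1 hθ.2).ne') hγ
    · rw [sq_matA_mul_matB hs, cos_two_mul]

theorem exists_eq_cos_of_pow_matA_mul_matB_eq_one [Nontrivial 𝒜] (hs : s ^ 2 = 1) {γ : ℝ}
    (hγ : γ ≠ 0) (X : 𝒜ˣ) {n : ℕ} (hn : 0 < n) (h : (matA γ s X * matB γ s ↑X⁻¹) ^ n = 1) :
    ∃ k m : ℕ, 0 < k ∧ k < m ∧ γ = cos (k * π / m) := by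
  obtain ⟨n, rfl⟩ := Nat.exists_eq_add_one_of_ne_zero hn.ne'
  have hU := ((pow_eq_one_iff_chebyshevU (matA_mul_matB_notMem_range_algebraMap hs hγ X)
    (sq_matA_mul_matB hs γ X) _).mp h).1
  rw [Nat.cast_add_one, add_sub_cancel_right] at hU
  obtain ⟨j, hj, hjn, hu⟩ := exists_eq_cos_of_chebyshevU_eval_eq_zero hU
  exact exists_eq_cos_of_two_mul_sq_sub_one_eq_cos hj hjn (by exact_mod_cast hu)

end

/-- Let `𝒜` be a (nontrivial) commutative `ℝ`-algebra, `q^{1/2}` and `X` units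
of `𝒜`, `q = (q^{1/2})²`, `γ ∈ ℝ`, and let
`A = [[-1, 2γ q^{1/2} X], [0, q]]`, `B = [[q, 0], [2γ q^{1/2} X⁻¹, -1]]`.
Suppose `q = 1`.  If `γ = cos (kπ/m)` with `0 < k < m` and `gcd (m, k) = 1`, then `AB`
has order exactly `m`; if `γ` is not of the form `cos (kπ/m)` with `0 < k < m`, then
`AB` has infinite order, i.e. `(AB)ⁿ ≠ 1` for all integers `n > 0`. -/
theorem stmt4 {𝒜 : Type*} [CommRing 𝒜] [Nontrivial 𝒜] [Algebra ℝ 𝒜] (q2 X : 𝒜ˣ) (γ : ℝ)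
    (A B : Matrix (Fin 2) (Fin 2) 𝒜)
    (hA : A = !![-1, algebraMap ℝ 𝒜 (2 * γ) * (q2 : 𝒜) * (X : 𝒜);
                 0, (q2 : 𝒜) ^ 2])
    (hB : B = !![(q2 : 𝒜) ^ 2, 0;
                 algebraMap ℝ 𝒜 (2 * γ) * (q2 : 𝒜) * ((X⁻¹ : 𝒜ˣ) : 𝒜), -1])
    (hq : (q2 : 𝒜) ^ 2 = 1) :
    (∀ k m : ℕ, 0 < k → k < m → Nat.gcd m k = 1 → γ = Real.cos (k * Real.pi / m) →
      orderOf (A * B) = m) ∧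
    ((¬ ∃ k m : ℕ, 0 < k ∧ k < m ∧ γ = Real.cos (k * Real.pi / m)) →
      ∀ n : ℕ, 0 < n → (A * B) ^ n ≠ 1) := by
  have hAB : A * B = matA γ (q2 : 𝒜) X * matB γ (q2 : 𝒜) ↑X⁻¹ := by rw [hA, hB]; rfl
  refine ⟨fun k m hk hkm hcop hγ => ?_, fun hne n hn hpow => hne ?_⟩
  · have hm : (0 : ℝ) < m := by exact_mod_cast hk.trans hkm
    have hθ : k * π / m ∈ Ioo 0 π := ⟨by positivity, by
      rw [div_lt_iff₀ hm, mul_comm]; gcongr⟩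
    subst hγ
    refine Nat.dvd_right_iff_eq.mp fun n => ?_
    rw [orderOf_dvd_iff_pow_eq_one, hAB, pow_matA_mul_matB_eq_one_iff hq X hθ,
      cos_nat_mul_two_mul_div_eq_one_iff (by omega) hcop]
  · refine exists_eq_cos_of_pow_matA_mul_matB_eq_one hq ?_ X hn (hAB ▸ hpow)
    rintro rfl
    exact hne ⟨1, 2, one_pos, one_lt_two, by simp⟩
end

section
/- Suppose in addition that conditions (D3), (D4) and (D5) hold for all s, t ∈ S. Then for each i ∈ {1,2} and all distinct s, t ∈ S: if ⟨α_s, β_t⟩⟨α_t, β_s⟩ = cos²(π/m) for some integer m ≥ 2, then the element ρ_i(s)ρ_i(t) has order exactly m in W_i; and if ⟨α_s, β_t⟩⟨α_t, β_s⟩ ≥ 1, then ρ_i(s)ρ_i(t) has infinite order in W_i. -/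
/-!
On the plane spanned by `x = αₛ`, `y = αₜ` the product `T` of the two reflections has trace
`t = 4⟨αₛ, βₜ⟩⟨αₜ, βₛ⟩ - 2` and determinant `1`, so `Tⁿ x` is given by the rescaled Chebyshev
polynomials `Sₙ(t)`; moreover `T` fixes the common kernel of the two linear forms, which is a
complement of the plane as long as `t ≠ 2`. If the product of pairings is `cos²(π/m)` with
`m ≥ 3`, then `t = 2 cos(2π/m)` and `Sₙ₋₁(t) sin(2π/m) = sin(2πn/m)`, so `Tⁿ x = x` exactly when
`m ∣ n`; for `m = 2` the two reflections commute and `T = -1` on the plane. If the product is at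
least `1`, then `t ≥ 2` and all `Sₙ(t)` are positive, so no power of `T` fixes `x`.
Reading off coefficients needs `αₛ, αₜ` to be linearly independent, which follows from
`0 ∉ PLC` together with the sign condition. The statement for `ρ₂` is the one for `ρ₁` applied
to the flipped pairing.
-/

open Pointwise

/-- The positive linear cone of a subset `A` of a real vector space. -/
def PLC {V : Type*} [AddCommGroup V] [Module ℝ V] (A : Set V) : Set V :=
  { v | ∃ c : V →₀ ℝ, (∀ a, 0 ≤ c a) ∧ ↑c.support ⊆ A ∧ c ≠ 0 ∧
          v = c.sum fun a t => t • a }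

open Module Polynomial.Chebyshev Real

section PositiveCone

variable {V : Type*} [AddCommGroup V] [Module ℝ V] {A : Set V}

theorem smul_add_smul_mem_PLC {v w : V} (hv : v ∈ A) (hw : w ∈ A) (hvw : v ≠ w) {c₁ c₂ : ℝ}
    (hc₁ : 0 ≤ c₁) (hc₂ : 0 ≤ c₂) (hc : c₁ ≠ 0 ∨ c₂ ≠ 0) : c₁ • v + c₂ • w ∈ PLC A := by
  classical
  refine ⟨Finsupp.single v c₁ + Finsupp.single w c₂, fun a => ?_, ?_, ?_, ?_⟩
  · simp only [Finsupp.add_apply, Finsupp.single_apply]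
    split_ifs <;> positivity
  · intro a ha
    rcases Finset.mem_union.mp (Finsupp.support_add ha) with ha | ha <;>
      rwa [Finset.mem_singleton.mp (Finsupp.support_single_subset ha)]
  · intro h0
    rcases hc with hc | hc
    · exact hc (by simpa [hvw.symm] using DFunLike.congr_fun h0 v)
    · exact hc (by simpa [hvw] using DFunLike.congr_fun h0 w)
  · rw [Finsupp.sum_add_index' (fun a => zero_smul ℝ a) (fun a t₁ t₂ => add_smul t₁ t₂ a),
      Finsupp.sum_single_index (zero_smul ℝ v), Finsupp.sum_single_index (zero_smul ℝ w)]

theorem linearIndependent_pair_of_zero_notMem_PLC (hA : (0 : V) ∉ PLC A) {v w : V} (hv : v ∈ A)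
    (hw : w ∈ A) (φ : V →ₗ[ℝ] ℝ) (hφv : φ v ≤ 0) (hφw : 0 < φ w) :
    LinearIndependent ℝ ![v, w] := by
  have hvw : v ≠ w := by rintro rfl; linarith
  refine LinearIndependent.pair_iff.mpr fun c₁ c₂ h => ?_
  by_contra hc
  rw [not_and_or] at hc
  have hφ : c₁ * φ v + c₂ * φ w = 0 := by simpa using congr(φ $h)
  have hsign : (0 ≤ c₁ ∧ 0 ≤ c₂) ∨ (c₁ ≤ 0 ∧ c₂ ≤ 0) := by
    -- `φ` takes opposite signs on `v` and `w`
    rcases le_total 0 c₁ with h₁ | h₁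
    · exact .inl ⟨h₁, by nlinarith⟩
    · exact .inr ⟨h₁, by nlinarith⟩
  rcases hsign with ⟨h₁, h₂⟩ | ⟨h₁, h₂⟩
  · exact hA (h ▸ smul_add_smul_mem_PLC hv hw hvw h₁ h₂ hc)
  · refine hA ?_
    have := smul_add_smul_mem_PLC hv hw hvw (neg_nonneg.mpr h₁) (neg_nonneg.mpr h₂)
      (by simpa only [ne_eq, neg_eq_zero] using hc)
    rwa [neg_smul, neg_smul, ← neg_add, h, neg_zero] at this

end PositiveCone

theorem LinearMap.eq_id_of_apply_eq_self_of_ker_inf_ker {K M : Type*} [Field K] [AddCommGroup M]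
    [Module K M] {x y : M} {f g : Dual K M} (hdet : f x * g y - f y * g x ≠ 0)
    {u : M →ₗ[K] M} (hker : ∀ z, f z = 0 → g z = 0 → u z = z) (hx : u x = x) (hy : u y = y) :
    u = LinearMap.id := by
  ext z
  set d := f x * g y - f y * g x
  -- Cramer's rule
  set c₁ := d⁻¹ * (g y * f z - f y * g z)
  set c₂ := d⁻¹ * (f x * g z - g x * f z)
  have hf : f (z - c₁ • x - c₂ • y) = 0 := by
    simp only [map_sub, map_smul, smul_eq_mul, c₁, c₂]; field_simp; ring
  have hg : g (z - c₁ • x - c₂ • y) = 0 := by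
    simp only [map_sub, map_smul, smul_eq_mul, c₁, c₂]; field_simp; ring
  calc u z = u (z - c₁ • x - c₂ • y) + c₁ • u x + c₂ • u y := by
        simp only [map_sub, map_smul]; abel
    _ = z := by rw [hker _ hf hg, hx, hy]; abel

theorem Real.cos_mul_two_pi_div_eq_one_iff {m : ℕ} (hm : m ≠ 0) (n : ℤ) :
    cos (n * (2 * π / m)) = 1 ↔ (m : ℤ) ∣ n := by
  rw [cos_eq_one_iff]
  constructor
  · rintro ⟨k, hk⟩
    refine ⟨k, ?_⟩
    field_simp at hk
    rw [mul_comm]; exact_mod_cast hk.symm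
  · rintro ⟨k, rfl⟩
    exact ⟨k, by push_cast; field_simp⟩

namespace Polynomial.Chebyshev

theorem eval_S_sub_one_eq_zero_and_eval_S_eq_one_iff {φ : ℝ} (hφ : sin φ ≠ 0) (n : ℤ) :
    (S ℝ (n - 1)).eval (2 * cos φ) = 0 ∧ (S ℝ n).eval (2 * cos φ) = 1 ↔ cos (n * φ) = 1 := by
  have h₀ := S_two_mul_real_cos φ (n - 1)
  have h₁ := S_two_mul_real_cos φ n
  push_cast at h₀
  rw [sub_add_cancel] at h₀
  rw [add_mul, one_mul, sin_add] at h₁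
  constructor
  · rintro ⟨hS₀, hS₁⟩
    rw [hS₀, zero_mul, eq_comm] at h₀
    rw [hS₁, h₀, zero_mul, zero_add, one_mul] at h₁
    exact (mul_eq_right₀ hφ).mp h₁.symm
  · intro hcos
    have hsin : sin (n * φ) = 0 := by nlinarith [sin_sq_add_cos_sq (n * φ)]
    rw [hsin, ← zero_mul (sin φ)] at h₀
    rw [hsin, hcos, zero_mul, zero_add, one_mul] at h₁
    exact ⟨mul_right_cancel₀ hφ h₀, (mul_eq_right₀ hφ).mp h₁⟩

theorem eval_S_pos_of_two_le {t : ℝ} (ht : 2 ≤ t) (n : ℕ) : 0 < (S ℝ n).eval t := by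
  have key (k : ℕ) : 0 < (S ℝ k).eval t ∧ (S ℝ k).eval t ≤ (S ℝ (k + 1)).eval t := by
    induction k with
    | zero => exact ⟨by simp, by simpa using one_le_two.trans ht⟩
    | succ k ih =>
      have := S_add_two ℝ k
      push_cast at this ⊢
      refine ⟨by linarith, ?_⟩
      rw [show (k : ℤ) + 1 + 1 = k + 2 by ring, this]
      simp only [Polynomial.eval_sub, Polynomial.eval_mul, Polynomial.eval_X]
      nlinarith
  exact (key n).1

end Polynomial.Chebyshev

namespace Module

variable {M : Type*} [AddCommGroup M] [Module ℝ M] {x y : M} {f g : Dual ℝ M}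

theorem reflection_mul_reflection_pow_apply_of_ker (hf : f x = 2) (hg : g y = 2) {z : M}
    (hfz : f z = 0) (hgz : g z = 0) (n : ℕ) : ((reflection hf * reflection hg) ^ n) z = z := by
  rw [LinearEquiv.coe_pow]
  exact Function.iterate_fixed (by simp [reflection_apply, hfz, hgz]) n

theorem reflection_mul_reflection_pow_eq_one (hf : f x = 2) (hg : g y = 2) (h4 : f y * g x ≠ 4)
    {n : ℕ} (hx : ((reflection hf * reflection hg) ^ n) x = x)
    (hy : ((reflection hf * reflection hg) ^ n) y = y) :
    (reflection hf * reflection hg) ^ n = 1 := by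
  have hdet : f x * g y - f y * g x ≠ 0 := by
    rw [hf, hg]; contrapose! h4; linarith
  have := LinearMap.eq_id_of_apply_eq_self_of_ker_inf_ker hdet
    (u := ((reflection hf * reflection hg) ^ n).toLinearMap)
    (fun _ hfz hgz => reflection_mul_reflection_pow_apply_of_ker hf hg hfz hgz n) hx hy
  exact LinearEquiv.ext (LinearMap.congr_fun this)

theorem eval_S_of_reflection_mul_reflection_pow_apply_self (hf : f x = 2) (hg : g y = 2)
    (hxy : LinearIndependent ℝ ![x, y]) {n : ℕ}
    (h : ((reflection hf * reflection hg) ^ n) x = x) :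
    (S ℝ (n - 1)).eval (f y * g x - 2) * g x = 0 ∧
      (S ℝ n).eval (f y * g x - 2) + (S ℝ (n - 1)).eval (f y * g x - 2) = 1 := by
  rw [reflection_mul_reflection_pow_apply_self hf hg n] at h
  obtain ⟨hx, hy⟩ := LinearIndependent.pair_iff.mp hxy
    ((S ℝ n).eval (f y * g x - 2) + (S ℝ (n - 1)).eval (f y * g x - 2) - 1)
    ((S ℝ (n - 1)).eval (f y * g x - 2) * -g x) (by linear_combination (norm := module) h)
  constructor
  · linear_combination -hy
  · linear_combination hx

theorem reflection_mul_reflection_pow_apply_self_eq_self_iff (hf : f x = 2) (hg : g y = 2)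
    (hxy : LinearIndependent ℝ ![x, y]) (hgx : g x ≠ 0) {φ : ℝ} (hφ : sin φ ≠ 0)
    (ht : f y * g x - 2 = 2 * cos φ) (n : ℕ) :
    ((reflection hf * reflection hg) ^ n) x = x ↔ cos (n * φ) = 1 := by
  rw [← Int.cast_natCast, ← eval_S_sub_one_eq_zero_and_eval_S_eq_one_iff hφ, ← ht]
  constructor
  · intro h
    obtain ⟨h₀, h₁⟩ := eval_S_of_reflection_mul_reflection_pow_apply_self hf hg hxy h
    have h₀ := (mul_eq_zero.mp h₀).resolve_right hgx
    exact ⟨h₀, by linarith⟩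
  · rintro ⟨h₀, h₁⟩
    rw [reflection_mul_reflection_pow_apply_self hf hg n, h₀, h₁]
    simp

theorem orderOf_reflection_mul_reflection_eq_two (hf : f x = 2) (hg : g y = 2)
    (hfy : f y = 0) (hgx : g x = 0) : orderOf (reflection hf * reflection hg) = 2 := by
  have hx : (reflection hf * reflection hg) x = -x := by
    rw [LinearEquiv.mul_apply, reflection_apply x hg, hgx, zero_smul, sub_zero,
      reflection_apply_self]
  have hy : (reflection hf * reflection hg) y = -y := by
    rw [LinearEquiv.mul_apply, reflection_apply_self, map_neg, reflection_apply, hfy, zero_smul,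
      sub_zero]
  refine orderOf_eq_prime (reflection_mul_reflection_pow_eq_one hf hg (by simp [hfy])
    (by rw [pow_two, LinearEquiv.mul_apply, hx, map_neg, hx, neg_neg])
    (by rw [pow_two, LinearEquiv.mul_apply, hy, map_neg, hy, neg_neg])) fun h1 => ?_
  have hx' : -x = x := by rw [← hx, h1, LinearEquiv.coe_one, id]
  have := congr_arg f hx'
  rw [map_neg, hf] at this
  norm_num at this

theorem reflection_mul_reflection_pow_eq_one_iff (hf : f x = 2) (hg : g y = 2)
    (hxy : LinearIndependent ℝ ![x, y]) (hfy : f y ≠ 0) (hgx : g x ≠ 0) {φ : ℝ}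
    (hφ : sin φ ≠ 0) (ht : f y * g x - 2 = 2 * cos φ) (n : ℕ) :
    (reflection hf * reflection hg) ^ n = 1 ↔ cos (n * φ) = 1 := by
  have h4 : f y * g x ≠ 4 := by
    intro h4
    have : sin φ ^ 2 = 0 := by nlinarith [sin_sq_add_cos_sq φ]
    exact hφ (pow_eq_zero_iff two_ne_zero |>.mp this)
  have hx := reflection_mul_reflection_pow_apply_self_eq_self_iff hf hg hxy hgx hφ ht n
  have hy := reflection_mul_reflection_pow_apply_self_eq_self_iff hg hf
    (LinearIndependent.pair_symm_iff.mp hxy) hfy hφ (by rw [mul_comm, ht]) n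
  refine ⟨fun h1 => hx.mp (by rw [h1]; rfl), fun hc =>
    reflection_mul_reflection_pow_eq_one hf hg h4 (hx.mpr hc) ?_⟩
  -- the inverse of `r_f * r_g` is `r_g * r_f`, to which `hy` applies
  rw [← inv_inv (reflection hf * reflection hg), mul_inv_rev, reflection_inv, reflection_inv,
    inv_pow]
  exact (LinearEquiv.symm_apply_eq _).mpr (hy.mpr hc).symm

theorem orderOf_reflection_mul_reflection_of_three_le (hf : f x = 2) (hg : g y = 2)
    (hxy : LinearIndependent ℝ ![x, y]) {m : ℕ} (hm : 3 ≤ m)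
    (h : f y * g x = 4 * cos (π / m) ^ 2) : orderOf (reflection hf * reflection hg) = m := by
  have hm₀ : (0 : ℝ) < m := by positivity
  have hm₃ : (3 : ℝ) ≤ m := by exact_mod_cast hm
  have hφ : sin (2 * π / m) ≠ 0 := by
    refine (sin_pos_of_pos_of_lt_pi (by positivity) ?_).ne'
    rw [div_lt_iff₀ hm₀]; nlinarith [pi_pos]
  have ht : f y * g x - 2 = 2 * cos (2 * π / m) := by
    rw [h, show 2 * π / m = 2 * (π / m) by ring, cos_two_mul]; ring
  have hprod : f y * g x ≠ 0 := by
    have : 0 < cos (π / m) := by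
      refine cos_pos_of_mem_Ioo ⟨by linarith [div_pos pi_pos hm₀, pi_pos], ?_⟩
      rw [div_lt_iff₀ hm₀]; nlinarith [pi_pos]
    rw [h]; positivity
  have key (n : ℕ) : (reflection hf * reflection hg) ^ n = 1 ↔ m ∣ n := by
    rw [reflection_mul_reflection_pow_eq_one_iff hf hg hxy (left_ne_zero_of_mul hprod)
      (right_ne_zero_of_mul hprod) hφ ht, ← Int.cast_natCast,
      cos_mul_two_pi_div_eq_one_iff (by omega), Int.natCast_dvd_natCast]
  exact Nat.dvd_antisymm (orderOf_dvd_iff_pow_eq_one.mpr ((key m).mpr dvd_rfl))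
    ((key _).mp (pow_orderOf_eq_one _))

theorem orderOf_reflection_mul_reflection_of_eq_four_mul_cos_sq (hf : f x = 2) (hg : g y = 2)
    (hxy : LinearIndependent ℝ ![x, y]) (hfg : f y = 0 ↔ g x = 0) {m : ℕ} (hm : 2 ≤ m)
    (h : f y * g x = 4 * cos (π / m) ^ 2) : orderOf (reflection hf * reflection hg) = m := by
  obtain rfl | hm := hm.eq_or_lt
  · have hfy : f y = 0 := by
      rcases mul_eq_zero.mp (h.trans (by norm_num)) with hfy | hgx
      exacts [hfy, hfg.mpr hgx]
    exact orderOf_reflection_mul_reflection_eq_two hf hg hfy (hfg.mp hfy)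
  · exact orderOf_reflection_mul_reflection_of_three_le hf hg hxy hm h

theorem orderOf_reflection_mul_reflection_eq_zero_of_four_le (hf : f x = 2) (hg : g y = 2)
    (hxy : LinearIndependent ℝ ![x, y]) (h : 4 ≤ f y * g x) :
    orderOf (reflection hf * reflection hg) = 0 := by
  refine orderOf_eq_zero_iff'.mpr fun n hn h1 => ?_
  have hgx : g x ≠ 0 := by rintro h0; rw [h0, mul_zero] at h; norm_num at h
  obtain ⟨h₀, -⟩ := eval_S_of_reflection_mul_reflection_pow_apply_self hf hg hxy (n := n)
    (by rw [h1, LinearEquiv.coe_one, id])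
  rw [show (n : ℤ) - 1 = ((n - 1 : ℕ) : ℤ) by omega] at h₀
  exact mul_ne_zero (eval_S_pos_of_two_le (by linarith) _).ne' hgx h₀

theorem orderOf_preReflection_mul_preReflection (hf : f x = 2) (hg : g y = 2) :
    orderOf (preReflection x f * preReflection y g) = orderOf (reflection hf * reflection hg) :=
  orderOf_injective LinearEquiv.automorphismGroup.toLinearMapMonoidHom
    LinearEquiv.toLinearMap_injective (reflection hf * reflection hg)

end Module

theorem orderOf_mul_of_pairing {V W : Type*} [AddCommGroup V] [Module ℝ V] [AddCommGroup W]
    [Module ℝ W] (pair : V →ₗ[ℝ] W →ₗ[ℝ] ℝ) {A : Set V} (hA : (0 : V) ∉ PLC A) {x y : V}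
    {u v : W} (hx : x ∈ A) (hy : y ∈ A) (hxu : pair x u = 1) (hyv : pair y v = 1)
    (hxv : pair x v ≤ 0) (hiff : pair x v = 0 ↔ pair y u = 0)
    {r s : End ℝ V} (hr : ∀ z, r z = z - (2 * pair z u) • x)
    (hs : ∀ z, s z = z - (2 * pair z v) • y) :
    (∀ m : ℕ, 2 ≤ m → pair x v * pair y u = cos (π / m) ^ 2 → orderOf (r * s) = m) ∧
      (1 ≤ pair x v * pair y u → ¬ IsOfFinOrder (r * s)) := by
  set f : Dual ℝ V := 2 • pair.flip u
  set g : Dual ℝ V := 2 • pair.flip v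
  have hf : f x = 2 := by simp [f, hxu]
  have hg : g y = 2 := by simp [g, hyv]
  have hrs : r * s = preReflection x f * preReflection y g := by
    ext z; simp [hr, hs, preReflection_apply, f, g]
  have hprod : f y * g x = 4 * (pair x v * pair y u) := by simp [f, g]; ring
  have hxy := linearIndependent_pair_of_zero_notMem_PLC hA hx hy (pair.flip v) hxv (by simp [hyv])
  rw [hrs, ← orderOf_eq_zero_iff, orderOf_preReflection_mul_preReflection hf hg]
  refine ⟨fun m hm hc => orderOf_reflection_mul_reflection_of_eq_four_mul_cos_sq hf hg hxy
    (by simp [f, g, hiff]) hm (by rw [hprod, hc]),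
    fun hc => orderOf_reflection_mul_reflection_eq_zero_of_four_le hf hg hxy
      (by rw [hprod]; linarith)⟩

theorem stmt7_general {S V₁ V₂ : Type*} [AddCommGroup V₁] [Module ℝ V₁]
    [AddCommGroup V₂] [Module ℝ V₂]
    (pair : V₁ →ₗ[ℝ] V₂ →ₗ[ℝ] ℝ) (α : S → V₁) (β : S → V₂)
    (D1 : ∀ s, pair (α s) (β s) = 1)
    (D2a : (0 : V₁) ∉ PLC (Set.range α)) (D2b : (0 : V₂) ∉ PLC (Set.range β))
    (D3 : ∀ s t : S, s ≠ t → pair (α s) (β t) ≤ 0 ∧ pair (α t) (β s) ≤ 0)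
    (D4 : ∀ s t : S, pair (α s) (β t) = 0 ↔ pair (α t) (β s) = 0)
    (ρ₁ : S → Module.End ℝ V₁) (ρ₂ : S → Module.End ℝ V₂)
    (hρ₁ : ∀ s x, ρ₁ s x = x - (2 * pair x (β s)) • α s)
    (hρ₂ : ∀ s y, ρ₂ s y = y - (2 * pair (α s) y) • β s) :
    ∀ s t : S, s ≠ t →
      (∀ m : ℕ, 2 ≤ m →
        pair (α s) (β t) * pair (α t) (β s) = Real.cos (Real.pi / m) ^ 2 →
          orderOf (ρ₁ s * ρ₁ t) = m ∧ orderOf (ρ₂ s * ρ₂ t) = m) ∧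
      (1 ≤ pair (α s) (β t) * pair (α t) (β s) →
        ¬ IsOfFinOrder (ρ₁ s * ρ₁ t) ∧ ¬ IsOfFinOrder (ρ₂ s * ρ₂ t)) := by
  intro s t hst
  obtain ⟨hst_le, hts_le⟩ := D3 s t hst
  have side₁ := orderOf_mul_of_pairing pair D2a (Set.mem_range_self s) (Set.mem_range_self t)
    (D1 s) (D1 t) hst_le (D4 s t) (hρ₁ s) (hρ₁ t)
  have side₂ := orderOf_mul_of_pairing pair.flip D2b (Set.mem_range_self s)
    (Set.mem_range_self t) (D1 s) (D1 t) hts_le (D4 s t).symm (hρ₂ s) (hρ₂ t)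
  simp only [LinearMap.flip_apply, mul_comm (pair (α t) (β s))] at side₂
  exact ⟨fun m hm hc => ⟨side₁.1 m hm hc, side₂.1 m hm hc⟩,
    fun hc => ⟨side₁.2 hc, side₂.2 hc⟩⟩

/-- Suppose (D1)–(D5) hold.  Then for each `i ∈ {1,2}` and all distinct
`s, t ∈ S`: if `⟨αₛ, βₜ⟩⟨αₜ, βₛ⟩ = cos²(π/m)` for an integer `m ≥ 2` then `ρᵢ(s) ρᵢ(t)`
has order exactly `m`, and if `⟨αₛ, βₜ⟩⟨αₜ, βₛ⟩ ≥ 1` then `ρᵢ(s) ρᵢ(t)` has infinite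
order (the order being computed in the multiplicative monoid of linear endomorphisms,
which contains `Wᵢ`). -/
theorem stmt7 {S V₁ V₂ : Type*} [AddCommGroup V₁] [Module ℝ V₁]
    [AddCommGroup V₂] [Module ℝ V₂]
    (pair : V₁ →ₗ[ℝ] V₂ →ₗ[ℝ] ℝ) (α : S → V₁) (β : S → V₂)
    (hα : Function.Injective α) (hβ : Function.Injective β)
    (D1 : ∀ s, pair (α s) (β s) = 1)
    (D2a : (0 : V₁) ∉ PLC (Set.range α)) (D2b : (0 : V₂) ∉ PLC (Set.range β))
    (D2c : ∀ s, α s ∉ PLC (Set.range α \ {α s}))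
    (D2d : ∀ s, β s ∉ PLC (Set.range β \ {β s}))
    (D3 : ∀ s t : S, s ≠ t → pair (α s) (β t) ≤ 0 ∧ pair (α t) (β s) ≤ 0)
    (D4 : ∀ s t : S, pair (α s) (β t) = 0 ↔ pair (α t) (β s) = 0)
    (D5 : ∀ s t : S, s ≠ t →
      (∃ m : ℕ, 2 ≤ m ∧
          pair (α s) (β t) * pair (α t) (β s) = Real.cos (Real.pi / m) ^ 2) ∨
        1 ≤ pair (α s) (β t) * pair (α t) (β s))
    (ρ₁ : S → Module.End ℝ V₁) (ρ₂ : S → Module.End ℝ V₂)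
    (hρ₁ : ∀ s x, ρ₁ s x = x - (2 * pair x (β s)) • α s)
    (hρ₂ : ∀ s y, ρ₂ s y = y - (2 * pair (α s) y) • β s) :
    ∀ s t : S, s ≠ t →
      (∀ m : ℕ, 2 ≤ m →
        pair (α s) (β t) * pair (α t) (β s) = Real.cos (Real.pi / m) ^ 2 →
          orderOf (ρ₁ s * ρ₁ t) = m ∧ orderOf (ρ₂ s * ρ₂ t) = m) ∧
      (1 ≤ pair (α s) (β t) * pair (α t) (β s) →
        ¬ IsOfFinOrder (ρ₁ s * ρ₁ t) ∧ ¬ IsOfFinOrder (ρ₂ s * ρ₂ t)) :=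
  stmt7_general pair α β D1 D2a D2b D3 D4 ρ₁ ρ₂ hρ₁ hρ₂
end

section
/- For every w ∈ W and each i ∈ {1,2}, N̄(w) = {r_x : x ∈ Φ_i⁺ with x̂ ∈ N_i(w)}; that is, the set of reflections t ∈ T with ℓ(wt) < ℓ(w) coincides with the set of reflections corresponding to the (classes of) positive roots sent to negative roots by w. -/
open Pointwise

/-- `altEnd a b m` is the alternating product `⋯ a b a b` … of `m` factors,
ending with `b` (e.g. `altEnd a b 3 = b * a * b`). -/
def altEnd {G : Type*} [Monoid G] : G → G → ℕ → G
  | _, _, 0 => 1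
  | a, b, m + 1 => altEnd b a m * b

/-- The class of `z` under the equivalence "being nonzero scalar multiples of each
other" (the class `ẑ`). -/
def rayClass {V : Type*} [AddCommGroup V] [Module ℝ V] (z : V) : Set V :=
  { v | ∃ c : ℝ, c ≠ 0 ∧ v = c • z }

/-- The set `Â = {ẑ : z ∈ A}` of scalar-equivalence classes of elements of `A`. -/
def rayClasses {V : Type*} [AddCommGroup V] [Module ℝ V] (A : Set V) : Set (Set V) :=
  { C | ∃ z ∈ A, C = rayClass z }

/-- A Coxeter datum `(S, V₁, V₂, Π₁, Π₂, ⟨·,·⟩)` satisfying (D1)–(D5), together with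
its associated abstract Coxeter group `W` (a group generated by involutions
`r s`, acting faithfully on `V₁` and `V₂` in the prescribed way, with the pairing
`W`-invariant), the decomposition `Φᵢ = Φᵢ⁺ ⊎ Φᵢ⁻` of the paired root systems, the
`W`-equivariant bijection `φ : Φ₁ → Φ₂` (with inverse `phiInv`), and the reflections
`r_x ∈ T` attached to the roots `x ∈ Φ₁` (`refl₁`) resp. `y ∈ Φ₂` (`refl₂`). -/
structure CoxeterDatum (S : Type*) (V₁ : Type*) (V₂ : Type*) (W : Type*)
    [AddCommGroup V₁] [Module ℝ V₁] [AddCommGroup V₂] [Module ℝ V₂] [Group W] where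
  pair : V₁ →ₗ[ℝ] V₂ →ₗ[ℝ] ℝ
  α : S → V₁
  β : S → V₂
  α_inj : Function.Injective α
  β_inj : Function.Injective β
  D1 : ∀ s, pair (α s) (β s) = 1
  D2a : (0 : V₁) ∉ PLC (Set.range α)
  D2b : (0 : V₂) ∉ PLC (Set.range β)
  D2c : ∀ s, α s ∉ PLC (Set.range α \ {α s})
  D2d : ∀ s, β s ∉ PLC (Set.range β \ {β s})
  D3 : ∀ s t, s ≠ t → pair (α s) (β t) ≤ 0
  D4 : ∀ s t, pair (α s) (β t) = 0 → pair (α t) (β s) = 0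
  D5 : ∀ s t, s ≠ t →
    (∃ m : ℕ, 2 ≤ m ∧ pair (α s) (β t) * pair (α t) (β s) = Real.cos (Real.pi / m) ^ 2) ∨
      1 ≤ pair (α s) (β t) * pair (α t) (β s)
  /-- the Coxeter generators `R = {r s : s ∈ S}` of `W` -/
  r : S → W
  r_gen : Subgroup.closure (Set.range r) = ⊤
  r_ne_one : ∀ s, r s ≠ 1
  r_sq : ∀ s, r s * r s = 1
  /-- the faithful action of `W` on `V₁` -/
  ρ₁ : W →* Module.End ℝ V₁
  /-- the faithful action of `W` on `V₂` -/
  ρ₂ : W →* Module.End ℝ V₂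
  ρ₁_inj : Function.Injective ρ₁
  ρ₂_inj : Function.Injective ρ₂
  hr₁ : ∀ s x, ρ₁ (r s) x = x - (2 * pair x (β s)) • α s
  hr₂ : ∀ s y, ρ₂ (r s) y = y - (2 * pair (α s) y) • β s
  pair_inv : ∀ w x y, pair (ρ₁ w x) (ρ₂ w y) = pair x y
  /-- the `W`-equivariant bijection `φ : Φ₁ → Φ₂` -/
  phi : V₁ → V₂
  /-- the inverse `φ⁻¹ : Φ₂ → Φ₁` -/
  phiInv : V₂ → V₁
  /-- the reflection `r_x` corresponding to a root `x ∈ Φ₁` -/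
  refl₁ : V₁ → W
  /-- the reflection `r_y` corresponding to a root `y ∈ Φ₂` -/
  refl₂ : V₂ → W
  decomp₁ : { v | ∃ w s, v = ρ₁ w (α s) } =
      ({ v | ∃ w s, v = ρ₁ w (α s) } ∩ PLC (Set.range α)) ∪
        (-({ v | ∃ w s, v = ρ₁ w (α s) } ∩ PLC (Set.range α)))
  disj₁ : Disjoint ({ v | ∃ w s, v = ρ₁ w (α s) } ∩ PLC (Set.range α))
      (-({ v | ∃ w s, v = ρ₁ w (α s) } ∩ PLC (Set.range α)))
  decomp₂ : { v | ∃ w s, v = ρ₂ w (β s) } =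
      ({ v | ∃ w s, v = ρ₂ w (β s) } ∩ PLC (Set.range β)) ∪
        (-({ v | ∃ w s, v = ρ₂ w (β s) } ∩ PLC (Set.range β)))
  disj₂ : Disjoint ({ v | ∃ w s, v = ρ₂ w (β s) } ∩ PLC (Set.range β))
      (-({ v | ∃ w s, v = ρ₂ w (β s) } ∩ PLC (Set.range β)))
  phi_mem : ∀ x ∈ { v | ∃ w s, v = ρ₁ w (α s) }, phi x ∈ { v | ∃ w s, v = ρ₂ w (β s) }
  phiInv_mem : ∀ y ∈ { v | ∃ w s, v = ρ₂ w (β s) }, phiInv y ∈ { v | ∃ w s, v = ρ₁ w (α s) }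
  phiInv_phi : ∀ x ∈ { v | ∃ w s, v = ρ₁ w (α s) }, phiInv (phi x) = x
  phi_phiInv : ∀ y ∈ { v | ∃ w s, v = ρ₂ w (β s) }, phi (phiInv y) = y
  phi_simple : ∀ s, phi (α s) = β s
  phi_equiv : ∀ w, ∀ x ∈ { v | ∃ w s, v = ρ₁ w (α s) }, phi (ρ₁ w x) = ρ₂ w (phi x)
  refl₁_eq : ∀ w s, refl₁ (ρ₁ w (α s)) = w * r s * w⁻¹
  refl₂_eq : ∀ w s, refl₂ (ρ₂ w (β s)) = w * r s * w⁻¹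
  refl₁_act : ∀ x ∈ { v | ∃ w s, v = ρ₁ w (α s) }, ∀ v,
      ρ₁ (refl₁ x) v = v - (2 * pair v (phi x)) • x
  refl₂_act : ∀ y ∈ { v | ∃ w s, v = ρ₂ w (β s) }, ∀ v,
      ρ₂ (refl₂ y) v = v - (2 * pair (phiInv y) v) • y

namespace CoxeterDatum

variable {S V₁ V₂ W : Type*} [AddCommGroup V₁] [Module ℝ V₁]
  [AddCommGroup V₂] [Module ℝ V₂] [Group W]

variable (D : CoxeterDatum S V₁ V₂ W)

/-- The root system `Φ₁ = W Π₁`. -/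
def Phi₁ : Set V₁ := { v | ∃ w s, v = D.ρ₁ w (D.α s) }

/-- The root system `Φ₂ = W Π₂`. -/
def Phi₂ : Set V₂ := { v | ∃ w s, v = D.ρ₂ w (D.β s) }

/-- The positive roots `Φ₁⁺ = Φ₁ ∩ PLC Π₁`. -/
def PhiPos₁ : Set V₁ := D.Phi₁ ∩ PLC (Set.range D.α)

/-- The positive roots `Φ₂⁺ = Φ₂ ∩ PLC Π₂`. -/
def PhiPos₂ : Set V₂ := D.Phi₂ ∩ PLC (Set.range D.β)

/-- The negative roots `Φ₁⁻ = -Φ₁⁺`. -/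
def PhiNeg₁ : Set V₁ := -D.PhiPos₁

/-- The negative roots `Φ₂⁻ = -Φ₂⁺`. -/
def PhiNeg₂ : Set V₂ := -D.PhiPos₂

/-- The set `T = ⋃_{w ∈ W} w R w⁻¹` of reflections of `W`. -/
def T : Set W := { t | ∃ w s, t = w * D.r s * w⁻¹ }

/-- The length function `ℓ` of `W` with respect to the Coxeter generators `R`. -/
noncomputable def len (w : W) : ℕ :=
  sInf { n | ∃ l : List S, l.length = n ∧ (l.map D.r).prod = w }

/-- `N̄ w = {t ∈ T : ℓ(w t) < ℓ(w)}`. -/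
noncomputable def Nbar (w : W) : Set W :=
  { t | t ∈ D.T ∧ D.len (w * t) < D.len w }

/-- `N₁ w = {ẑ : z ∈ Φ₁⁺, w z ∈ Φ₁⁻}`. -/
def N₁ (w : W) : Set (Set V₁) :=
  { C | ∃ z, z ∈ D.PhiPos₁ ∧ D.ρ₁ w z ∈ D.PhiNeg₁ ∧ C = rayClass z }

/-- `N₂ w = {ẑ : z ∈ Φ₂⁺, w z ∈ Φ₂⁻}`. -/
def N₂ (w : W) : Set (Set V₂) :=
  { C | ∃ z, z ∈ D.PhiPos₂ ∧ D.ρ₂ w z ∈ D.PhiNeg₂ ∧ C = rayClass z }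

/-- A subgroup `W'` of `W` is a reflection subgroup when `W' = ⟨W' ∩ T⟩`. -/
def IsReflectionSubgroup (W' : Subgroup W) : Prop :=
  W' = Subgroup.closure ((W' : Set W) ∩ D.T)

/-- `Φ₁(W') = {x ∈ Φ₁ : r_x ∈ W'}`. -/
def PhiSub₁ (W' : Subgroup W) : Set V₁ :=
  { x | x ∈ D.Phi₁ ∧ D.refl₁ x ∈ W' }

/-- `Φ₂(W') = {y ∈ Φ₂ : r_y ∈ W'}`. -/
def PhiSub₂ (W' : Subgroup W) : Set V₂ :=
  { y | y ∈ D.Phi₂ ∧ D.refl₂ y ∈ W' }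

/-- The canonical generators `S(W') = {t ∈ T : N̄(t) ∩ W' = {t}}`. -/
noncomputable def SW (W' : Subgroup W) : Set W :=
  { t | t ∈ D.T ∧ D.Nbar t ∩ (W' : Set W) = {t} }

/-- `Δ₁(W') = {x ∈ Φ₁⁺ : r_x ∈ S(W')}`. -/
noncomputable def Delta₁ (W' : Subgroup W) : Set V₁ :=
  { x | x ∈ D.PhiPos₁ ∧ D.refl₁ x ∈ D.SW W' }

/-- `Δ₂(W') = {y ∈ Φ₂⁺ : r_y ∈ S(W')}`. -/
noncomputable def Delta₂ (W' : Subgroup W) : Set V₂ :=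
  { y | y ∈ D.PhiPos₂ ∧ D.refl₂ y ∈ D.SW W' }

/-- The length function `ℓ_{W'}` of a reflection subgroup `W'` with respect to its
canonical generators `S(W')`. -/
noncomputable def lenIn (W' : Subgroup W) (w : W) : ℕ :=
  sInf { n | ∃ l : List W, l.length = n ∧ (∀ t ∈ l, t ∈ D.SW W') ∧ l.prod = w }

end CoxeterDatum

/-! For a positive root `x`, `ℓ(w r_x) < ℓ(w)` holds exactly when `w x` is negative. If `w x` is
negative, write `w = w' r_s` with `ℓ(w') < ℓ(w)`: either `x` is proportional to `α_s`, and then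
`r_x = r_s`, or `r_s x` is again positive (by (D2), `x` keeps a positive coefficient on a simple
root other than `α_s`) and induction on the length applies to `w'` and `r_s x`. If `w x` is
positive, the same argument applied to `w r_x` and `x` gives `ℓ(w) < ℓ(w r_x)`.
Proportional roots give the same reflection: if `v α_t = c α_s`, then `g = v r_t v⁻¹` acts on `V₂`
as a reflection `y ↦ y - 2⟨α_s, y⟩ b`, and it commutes with `r_s` because `g α_s = -α_s`; this
forces `b = β_s`, and faithfulness gives `g = r_s`. So the condition on `x` only depends on the
class `x̂`. The case `i = 2` is the case `i = 1` for the dual datum, which exchanges `V₁` and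
`V₂`. -/

namespace PLC

variable {V : Type*} [AddCommGroup V] [Module ℝ V] {A B : Set V} {a u v : V} {k : ℝ}

lemma mono (hAB : A ⊆ B) (hv : v ∈ PLC A) : v ∈ PLC B := by
  obtain ⟨f, hf0, hfA, hf, rfl⟩ := hv
  exact ⟨f, hf0, hfA.trans hAB, hf, rfl⟩

lemma smul_mem (hv : v ∈ PLC A) (hk : 0 < k) : k • v ∈ PLC A := by
  obtain ⟨f, hf0, hfA, hf, rfl⟩ := hv
  refine ⟨k • f, fun a => mul_nonneg hk.le (hf0 a),
    (Finset.coe_subset.mpr Finsupp.support_smul).trans hfA, smul_ne_zero hk.ne' hf, ?_⟩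
  rw [Finsupp.sum_smul_index' fun a => zero_smul ℝ a, Finsupp.smul_sum]
  simp only [smul_smul, smul_eq_mul]

lemma add_mem (hu : u ∈ PLC A) (hv : v ∈ PLC A) : u + v ∈ PLC A := by
  classical
  obtain ⟨f, hf0, hfA, hf, rfl⟩ := hu
  obtain ⟨g, hg0, hgA, -, rfl⟩ := hv
  refine ⟨f + g, fun a => add_nonneg (hf0 a) (hg0 a), ?_, ?_, ?_⟩
  · refine (Finset.coe_subset.mpr Finsupp.support_add).trans ?_
    rw [Finset.coe_union]
    exact Set.union_subset hfA hgA
  · refine fun hfg => hf (Finsupp.ext fun a => ?_)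
    exact ((add_eq_zero_iff_of_nonneg (hf0 a) (hg0 a)).mp (DFunLike.congr_fun hfg a)).1
  · exact (Finsupp.sum_add_index' (fun a => zero_smul ℝ a) fun a b c => add_smul b c a).symm

lemma smul_mem_of_mem (ha : a ∈ A) (hk : 0 < k) : k • a ∈ PLC A := by
  classical
  refine ⟨Finsupp.single a k, fun b => ?_, ?_, Finsupp.single_ne_zero.mpr hk.ne', ?_⟩
  · rw [Finsupp.single_apply]
    split_ifs <;> simp [hk.le]
  · exact (Finset.coe_subset.mpr Finsupp.support_single_subset).trans (by simpa using ha)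
  · rw [Finsupp.sum_single_index (zero_smul ℝ a)]

lemma add_smul_mem (hv : v ∈ PLC A) (ha : a ∈ A) (hk : 0 ≤ k) : v + k • a ∈ PLC A := by
  rcases hk.eq_or_lt with rfl | hk
  · simpa using hv
  · exact add_mem hv (smul_mem_of_mem ha hk)

lemma neg_notMem (h0 : (0 : V) ∉ PLC A) (hv : v ∈ PLC A) : -v ∉ PLC A :=
  fun hv' => h0 (by simpa using add_mem hv hv')

lemma pos_of_smul_mem (h0 : (0 : V) ∉ PLC A) (hv : v ∈ PLC A) (hkv : k • v ∈ PLC A) : 0 < k := by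
  by_contra! hk
  rcases hk.eq_or_lt with rfl | hk
  · exact h0 (by simpa using hkv)
  · exact neg_notMem h0 (smul_mem hv (neg_pos.mpr hk)) (by simpa using hkv)

lemma exists_eq_smul_add (hv : v ∈ PLC A) (a : V) :
    ∃ k : ℝ, 0 ≤ k ∧ (v = k • a ∨ ∃ v' ∈ PLC (A \ {a}), v = k • a + v') := by
  classical
  obtain ⟨f, hf0, hfA, -, rfl⟩ := hv
  have hsplit : f.sum (fun b t => t • b) = f a • a + (f.erase a).sum fun b t => t • b := by
    conv_lhs => rw [← Finsupp.single_add_erase a f]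
    rw [Finsupp.sum_add_index' (fun b => zero_smul ℝ b) fun b c d => add_smul c d b,
      Finsupp.sum_single_index (zero_smul ℝ a)]
  refine ⟨f a, hf0 a, ?_⟩
  by_cases he : f.erase a = 0
  · left
    rw [hsplit, he, Finsupp.sum_zero_index, add_zero]
  · refine Or.inr ⟨_, ⟨f.erase a, fun b => ?_, ?_, he, rfl⟩, hsplit⟩
    · rw [Finsupp.erase_apply]
      split_ifs
      exacts [le_rfl, hf0 b]
    · rw [Finsupp.support_erase, Finset.coe_erase]
      exact Set.sdiff_subset_sdiff_left hfA

end PLC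

namespace CoxeterDatum

variable {S V₁ V₂ W : Type*} [AddCommGroup V₁] [Module ℝ V₁]
  [AddCommGroup V₂] [Module ℝ V₂] [Group W] (D : CoxeterDatum S V₁ V₂ W)

@[simp]
lemma ρ₁_mul_apply (u v : W) (x : V₁) : D.ρ₁ (u * v) x = D.ρ₁ u (D.ρ₁ v x) := by
  rw [map_mul, Module.End.mul_apply]

@[simp]
lemma ρ₂_mul_apply (u v : W) (y : V₂) : D.ρ₂ (u * v) y = D.ρ₂ u (D.ρ₂ v y) := by
  rw [map_mul, Module.End.mul_apply]

@[simp]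
lemma ρ₁_one_apply (x : V₁) : D.ρ₁ 1 x = x := by
  rw [map_one, Module.End.one_apply]

@[simp]
lemma ρ₂_one_apply (y : V₂) : D.ρ₂ 1 y = y := by
  rw [map_one, Module.End.one_apply]

@[simp]
lemma ρ₁_apply_inv_apply (v : W) (x : V₁) : D.ρ₁ v (D.ρ₁ v⁻¹ x) = x := by
  rw [← ρ₁_mul_apply, mul_inv_cancel, ρ₁_one_apply]

@[simp]
lemma ρ₂_apply_inv_apply (v : W) (y : V₂) : D.ρ₂ v (D.ρ₂ v⁻¹ y) = y := by
  rw [← ρ₂_mul_apply, mul_inv_cancel, ρ₂_one_apply]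

lemma pair_ρ₁_inv_apply (v : W) (x : V₁) (y : V₂) :
    D.pair (D.ρ₁ v⁻¹ x) y = D.pair x (D.ρ₂ v y) := by
  rw [← D.pair_inv v, ← ρ₁_mul_apply, mul_inv_cancel, ρ₁_one_apply]

lemma pair_ρ₂_inv_apply (v : W) (x : V₁) (y : V₂) :
    D.pair x (D.ρ₂ v⁻¹ y) = D.pair (D.ρ₁ v x) y := by
  rw [← D.pair_inv v, ρ₂_apply_inv_apply]

lemma r_inv (s : S) : (D.r s)⁻¹ = D.r s :=
  inv_eq_of_mul_eq_one_right (D.r_sq s)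

lemma ρ₁_r_α (s : S) : D.ρ₁ (D.r s) (D.α s) = -D.α s := by
  rw [D.hr₁, D.D1]
  module

lemma α_mem_Phi₁ (s : S) : D.α s ∈ D.Phi₁ :=
  ⟨1, s, (D.ρ₁_one_apply _).symm⟩

lemma ρ₁_mem_Phi₁ (w : W) {x : V₁} (hx : x ∈ D.Phi₁) : D.ρ₁ w x ∈ D.Phi₁ := by
  obtain ⟨u, p, rfl⟩ := hx
  exact ⟨w * u, p, (D.ρ₁_mul_apply _ _ _).symm⟩

lemma neg_mem_Phi₁ {x : V₁} (hx : x ∈ D.Phi₁) : -x ∈ D.Phi₁ := by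
  obtain ⟨u, p, rfl⟩ := hx
  exact ⟨u * D.r p, p, by rw [ρ₁_mul_apply, ρ₁_r_α, map_neg]⟩

lemma mem_PhiPos₁_or_mem_PhiNeg₁ {x : V₁} (hx : x ∈ D.Phi₁) :
    x ∈ D.PhiPos₁ ∨ x ∈ D.PhiNeg₁ := by
  have h : D.Phi₁ = D.PhiPos₁ ∪ D.PhiNeg₁ := D.decomp₁
  rwa [h] at hx

lemma notMem_PhiNeg₁ {x : V₁} (hx : x ∈ D.PhiPos₁) : x ∉ D.PhiNeg₁ :=
  Set.disjoint_left.mp D.disj₁ hx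

lemma mem_PhiNeg₁_iff {x : V₁} : x ∈ D.PhiNeg₁ ↔ -x ∈ D.PhiPos₁ := Set.mem_neg

lemma refl₁_ρ₁ (w : W) {x : V₁} (hx : x ∈ D.Phi₁) :
    D.refl₁ (D.ρ₁ w x) = w * D.refl₁ x * w⁻¹ := by
  obtain ⟨u, p, rfl⟩ := hx
  rw [← ρ₁_mul_apply, D.refl₁_eq, D.refl₁_eq]
  group

lemma refl₁_mem_T {x : V₁} (hx : x ∈ D.Phi₁) : D.refl₁ x ∈ D.T := by
  obtain ⟨u, p, rfl⟩ := hx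
  exact ⟨u, p, D.refl₁_eq u p⟩

lemma refl₁_mul_self {x : V₁} (hx : x ∈ D.Phi₁) : D.refl₁ x * D.refl₁ x = 1 := by
  obtain ⟨u, p, rfl⟩ := hx
  rw [D.refl₁_eq, show u * D.r p * u⁻¹ * (u * D.r p * u⁻¹) = u * (D.r p * D.r p) * u⁻¹ by group,
    D.r_sq, mul_one, mul_inv_cancel]

lemma ρ₁_refl₁_self {x : V₁} (hx : x ∈ D.Phi₁) : D.ρ₁ (D.refl₁ x) x = -x := by
  obtain ⟨u, p, rfl⟩ := hx
  simp [D.refl₁_eq, ρ₁_r_α]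

lemma refl₁_neg {x : V₁} (hx : x ∈ D.Phi₁) : D.refl₁ (-x) = D.refl₁ x := by
  rw [← D.ρ₁_refl₁_self hx, D.refl₁_ρ₁ _ hx, mul_inv_cancel_right]

lemma exists_PhiPos₁_refl₁_eq {t : W} (ht : t ∈ D.T) : ∃ x ∈ D.PhiPos₁, D.refl₁ x = t := by
  obtain ⟨u, p, rfl⟩ := ht
  have hx : D.ρ₁ u (D.α p) ∈ D.Phi₁ := ⟨u, p, rfl⟩
  rcases D.mem_PhiPos₁_or_mem_PhiNeg₁ hx with hpos | hneg
  · exact ⟨_, hpos, D.refl₁_eq u p⟩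
  · exact ⟨_, D.mem_PhiNeg₁_iff.mp hneg, by rw [D.refl₁_neg hx, D.refl₁_eq]⟩

lemma smul_α_notMem_PLC_diff (s : S) (e : ℝ) : e • D.α s ∉ PLC (Set.range D.α \ {D.α s}) := by
  intro he
  rcases le_or_gt e 0 with hle | hpos
  · apply D.D2a
    have h := PLC.add_smul_mem (PLC.mono Set.sdiff_subset he) ⟨s, rfl⟩ (neg_nonneg.mpr hle)
    rwa [← add_smul, add_neg_cancel, zero_smul] at h
  · apply D.D2c s
    simpa [smul_smul, inv_mul_cancel₀ hpos.ne'] using PLC.smul_mem he (inv_pos.mpr hpos)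

lemma add_ne_smul_α {s : S} {y q : V₁} (hy : y ∈ PLC (Set.range D.α \ {D.α s}))
    (hq : q ∈ PLC (Set.range D.α)) (e : ℝ) : y + q ≠ e • D.α s := by
  intro h
  obtain ⟨k, -, rfl | ⟨q', hq', rfl⟩⟩ := PLC.exists_eq_smul_add hq (D.α s)
  · refine D.smul_α_notMem_PLC_diff s (e - k) ?_
    rwa [sub_smul, ← h, add_sub_cancel_right]
  · refine D.smul_α_notMem_PLC_diff s (e - k) ?_
    rw [sub_smul, ← h, show y + (k • D.α s + q') - k • D.α s = y + q' by abel]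
    exact PLC.add_mem hy hq'

lemma ρ₁_r_mem_PhiPos₁ {s : S} {x : V₁} (hx : x ∈ D.PhiPos₁) (hxs : ∀ c : ℝ, x ≠ c • D.α s) :
    D.ρ₁ (D.r s) x ∈ D.PhiPos₁ := by
  rcases D.mem_PhiPos₁_or_mem_PhiNeg₁ (D.ρ₁_mem_Phi₁ _ hx.1) with hpos | hneg
  · exact hpos
  exfalso
  obtain ⟨k, hk, rfl | ⟨x', hx', rfl⟩⟩ := PLC.exists_eq_smul_add hx.2 (D.α s)
  · exact hxs k rfl
  · refine D.add_ne_smul_α hx' (PLC.add_smul_mem (D.mem_PhiNeg₁_iff.mp hneg).2 ⟨s, rfl⟩ hk)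
      (2 * D.pair (k • D.α s + x') (D.β s)) ?_
    rw [D.hr₁]
    module

lemma eq_r_of_ρ₂_eq_reflection {g : W} {s : S} {b : V₂} (hb : D.pair (D.α s) b = 1)
    (hgα : D.ρ₁ g (D.α s) = -D.α s) (hg : ∀ y, D.ρ₂ g y = y - (2 * D.pair (D.α s) y) • b) :
    g = D.r s := by
  have hconj : g * D.r s * g⁻¹ = D.r s := by
    rw [← D.refl₁_eq, hgα, ← D.ρ₁_r_α, D.refl₁_eq, D.r_inv, mul_assoc, D.r_sq, mul_one]
  have hcomm : D.ρ₂ (g * D.r s) (D.β s) = D.ρ₂ (D.r s * g) (D.β s) := by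
    rw [← mul_inv_eq_iff_eq_mul.mp hconj]
  have hbβ : b = D.β s := by
    simp only [ρ₂_mul_apply, hg, D.hr₂, D.D1, map_sub, map_smul, hb, smul_eq_mul] at hcomm
    have h4 : (4 : ℝ) • (b - D.β s) = 0 := by
      rw [← sub_eq_zero.mpr hcomm]
      module
    simpa [sub_eq_zero] using h4
  apply D.ρ₂_inj
  ext y
  rw [hg, D.hr₂, hbβ]

lemma conj_r_eq_r_of_ρ₁_α_eq_smul {v : W} {t s : S} {c : ℝ}
    (h : D.ρ₁ v (D.α t) = c • D.α s) : v * D.r t * v⁻¹ = D.r s := by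
  have hb : D.pair (D.α s) (c • D.ρ₂ v (D.β t)) = 1 := by
    rw [map_smul, ← LinearMap.smul_apply, ← map_smul, ← h, D.pair_inv, D.D1]
  refine D.eq_r_of_ρ₂_eq_reflection hb ?_ fun y => ?_
  · rw [ρ₁_mul_apply, ρ₁_mul_apply, D.hr₁, map_sub, map_smul, ρ₁_apply_inv_apply, h,
      D.pair_ρ₁_inv_apply, smul_smul]
    rw [map_smul, smul_eq_mul] at hb
    rw [show 2 * D.pair (D.α s) (D.ρ₂ v (D.β t)) * c = 2 by linear_combination 2 * hb]
    module
  · rw [ρ₂_mul_apply, ρ₂_mul_apply, D.hr₂, map_sub, map_smul, ρ₂_apply_inv_apply,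
      D.pair_ρ₂_inv_apply, h, map_smul, LinearMap.smul_apply, smul_eq_mul]
    module

lemma refl₁_eq_r_of_eq_smul {x : V₁} (hx : x ∈ D.Phi₁) {s : S} {c : ℝ} (h : x = c • D.α s) :
    D.refl₁ x = D.r s := by
  obtain ⟨u, p, rfl⟩ := hx
  rw [D.refl₁_eq]
  exact D.conj_r_eq_r_of_ρ₁_α_eq_smul h

lemma exists_word (w : W) : ∃ l : List S, (l.map D.r).prod = w := by
  have hinv : (Set.range D.r)⁻¹ = Set.range D.r := by
    rw [Set.inv_range]
    simp only [D.r_inv]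
  have hw : w ∈ Submonoid.closure (Set.range D.r) := by
    rw [← Set.union_self (Set.range D.r), ← congrArg (Set.range D.r ∪ ·) hinv,
      ← Subgroup.closure_toSubmonoid, D.r_gen]
    trivial
  rw [← FreeMonoid.mrange_lift] at hw
  obtain ⟨l, rfl⟩ := hw
  exact ⟨l.toList, (FreeMonoid.lift_apply _ _).symm⟩

lemma len_le {w : W} {l : List S} (hl : (l.map D.r).prod = w) : D.len w ≤ l.length :=
  Nat.sInf_le ⟨l, rfl, hl⟩

lemma exists_word_length_eq_len (w : W) :
    ∃ l : List S, l.length = D.len w ∧ (l.map D.r).prod = w := by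
  obtain ⟨l, hl⟩ := D.exists_word w
  exact Nat.sInf_mem (s := {n | ∃ l : List S, l.length = n ∧ (l.map D.r).prod = w})
    ⟨l.length, l, rfl, hl⟩

lemma len_le_len_mul_r_add_one (w : W) (s : S) : D.len w ≤ D.len (w * D.r s) + 1 := by
  obtain ⟨l, hlen, hl⟩ := D.exists_word_length_eq_len (w * D.r s)
  refine (D.len_le (w := w) (l := l ++ [s]) ?_).trans (by simp [hlen])
  simp [hl, mul_assoc, D.r_sq]

lemma exists_eq_mul_r_len_lt {w : W} (hw : w ≠ 1) :
    ∃ (s : S) (w' : W), w = w' * D.r s ∧ D.len w' < D.len w := by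
  obtain ⟨l, hlen, hl⟩ := D.exists_word_length_eq_len w
  rcases List.eq_nil_or_concat l with rfl | ⟨l', s, rfl⟩
  · exact absurd hl.symm hw
  · refine ⟨s, (l'.map D.r).prod, by simp [← hl], ?_⟩
    have := D.len_le (l := l') rfl
    simp only [List.concat_eq_append, List.length_append, List.length_singleton] at hlen
    omega

theorem len_mul_refl₁_lt {w : W} {x : V₁} (hx : x ∈ D.PhiPos₁) (hwx : D.ρ₁ w x ∈ D.PhiNeg₁) :
    D.len (w * D.refl₁ x) < D.len w := by
  have hw : w ≠ 1 := by
    rintro rfl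
    exact D.notMem_PhiNeg₁ hx (by simpa using hwx)
  obtain ⟨s, w', rfl, hlt⟩ := D.exists_eq_mul_r_len_lt hw
  by_cases hxs : ∃ c : ℝ, x = c • D.α s
  · obtain ⟨c, hc⟩ := hxs
    rwa [D.refl₁_eq_r_of_eq_smul hx.1 hc, mul_assoc, D.r_sq, mul_one]
  · push Not at hxs
    have ih := len_mul_refl₁_lt (w := w') (D.ρ₁_r_mem_PhiPos₁ hx hxs)
      (by rwa [← ρ₁_mul_apply])
    rw [D.refl₁_ρ₁ _ hx.1, D.r_inv,
      show w' * (D.r s * D.refl₁ x * D.r s) = w' * D.r s * D.refl₁ x * D.r s by group] at ih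
    have := D.len_le_len_mul_r_add_one (w' * D.r s * D.refl₁ x) s
    omega
termination_by D.len w

theorem len_mul_refl₁_lt_iff {w : W} {x : V₁} (hx : x ∈ D.PhiPos₁) :
    D.len (w * D.refl₁ x) < D.len w ↔ D.ρ₁ w x ∈ D.PhiNeg₁ := by
  refine ⟨fun hlt => ?_, D.len_mul_refl₁_lt hx⟩
  rcases D.mem_PhiPos₁_or_mem_PhiNeg₁ (D.ρ₁_mem_Phi₁ w hx.1) with hpos | hneg
  · have h := D.len_mul_refl₁_lt (w := w * D.refl₁ x) hx (by
      rwa [ρ₁_mul_apply, D.ρ₁_refl₁_self hx.1, map_neg, mem_PhiNeg₁_iff, neg_neg])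
    rw [mul_assoc, D.refl₁_mul_self hx.1, mul_one] at h
    omega
  · exact hneg

lemma rayClass_mem_N₁_iff {w : W} {x : V₁} (hx : x ∈ D.PhiPos₁) :
    rayClass x ∈ D.N₁ w ↔ D.ρ₁ w x ∈ D.PhiNeg₁ := by
  refine ⟨?_, fun h => ⟨x, hx, h, rfl⟩⟩
  rintro ⟨z, hz, hwz, hxz⟩
  obtain ⟨c, -, rfl⟩ : z ∈ rayClass x := hxz ▸ ⟨1, one_ne_zero, (one_smul ℝ z).symm⟩
  have hc : 0 < c := PLC.pos_of_smul_mem D.D2a hx.2 hz.2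
  rw [mem_PhiNeg₁_iff] at hwz ⊢
  refine ⟨D.neg_mem_Phi₁ (D.ρ₁_mem_Phi₁ w hx.1), ?_⟩
  simpa [smul_smul, inv_mul_cancel₀ hc.ne'] using PLC.smul_mem hwz.2 (inv_pos.mpr hc)

theorem Nbar_eq_setOf_refl₁ (w : W) :
    D.Nbar w = { t | ∃ x ∈ D.PhiPos₁, rayClass x ∈ D.N₁ w ∧ t = D.refl₁ x } := by
  ext t
  constructor
  · rintro ⟨ht, hlt⟩
    obtain ⟨x, hx, rfl⟩ := D.exists_PhiPos₁_refl₁_eq ht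
    exact ⟨x, hx, (D.rayClass_mem_N₁_iff hx).2 ((D.len_mul_refl₁_lt_iff hx).1 hlt), rfl⟩
  · rintro ⟨x, hx, hN, rfl⟩
    exact ⟨D.refl₁_mem_T hx.1, (D.len_mul_refl₁_lt_iff hx).2 ((D.rayClass_mem_N₁_iff hx).1 hN)⟩

def dual : CoxeterDatum S V₂ V₁ W where
  pair := D.pair.flip
  α := D.β
  β := D.α
  α_inj := D.β_inj
  β_inj := D.α_inj
  D1 := D.D1
  D2a := D.D2b
  D2b := D.D2a
  D2c := D.D2d
  D2d := D.D2c
  D3 s t hst := D.D3 t s hst.symm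
  D4 s t := D.D4 t s
  D5 s t hst := D.D5 t s hst.symm
  r := D.r
  r_gen := D.r_gen
  r_ne_one := D.r_ne_one
  r_sq := D.r_sq
  ρ₁ := D.ρ₂
  ρ₂ := D.ρ₁
  ρ₁_inj := D.ρ₂_inj
  ρ₂_inj := D.ρ₁_inj
  hr₁ := D.hr₂
  hr₂ := D.hr₁
  pair_inv w y x := D.pair_inv w x y
  phi := D.phiInv
  phiInv := D.phi
  refl₁ := D.refl₂
  refl₂ := D.refl₁
  decomp₁ := D.decomp₂
  disj₁ := D.disj₂
  decomp₂ := D.decomp₁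
  disj₂ := D.disj₁
  phi_mem := D.phiInv_mem
  phiInv_mem := D.phi_mem
  phiInv_phi := D.phi_phiInv
  phi_phiInv := D.phiInv_phi
  phi_simple s := by
    rw [← D.phi_simple s]
    exact D.phiInv_phi _ (D.α_mem_Phi₁ s)
  phi_equiv w y hy := by
    have hx := D.phiInv_mem y hy
    conv_lhs => rw [← D.phi_phiInv y hy, ← D.phi_equiv w _ hx]
    exact D.phiInv_phi _ (D.ρ₁_mem_Phi₁ w hx)
  refl₁_eq := D.refl₂_eq
  refl₂_eq := D.refl₁_eq
  refl₁_act := D.refl₂_act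
  refl₂_act := D.refl₁_act

end CoxeterDatum

/-- For every `w ∈ W` and each `i ∈ {1,2}`,
`N̄(w) = {r_x : x ∈ Φᵢ⁺, x̂ ∈ Nᵢ(w)}`. -/
theorem stmt11 {S V₁ V₂ W : Type*} [AddCommGroup V₁] [Module ℝ V₁]
    [AddCommGroup V₂] [Module ℝ V₂] [Group W]
    (D : CoxeterDatum S V₁ V₂ W)
    (w : W) :
    D.Nbar w = { t | ∃ x ∈ D.PhiPos₁, rayClass x ∈ D.N₁ w ∧ t = D.refl₁ x } ∧
    D.Nbar w = { t | ∃ y ∈ D.PhiPos₂, rayClass y ∈ D.N₂ w ∧ t = D.refl₂ y } :=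
  ⟨D.Nbar_eq_setOf_refl₁ w, D.dual.Nbar_eq_setOf_refl₁ w⟩
end
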